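/- arXiv:1401.5450 — 11 statements merged into one kernel-verified Lean document; each statement's English description precedes it below -/
import Mathlib

section
/- Let θ be a real number. Suppose there exist real numbers k₀, l₀ > 0 and E, Q > 1 such that for every natural number r there are rational integers p_r and q_r with |q_r| < k₀·Q^r and |q_r·θ - p_r| ≤ l₀·E^{-r}, and such that p_r·q_{r+1} ≠ p_{r+1}·q_r for all r. Then for any rational integers p and q with |q| ≥ 1/(2l₀) one has |θ - p/q| > 1/(c·|q|^{κ+1}), where c = 2k₀·Q·(2l₀E)^κ and κ = log Q / log E. -/
/-!
Given `P'/Q'`, pick `r` with `E ^ (r - 1) ≤ 2 l₀ |Q'| < E ^ r`. Non-degeneracy makes one of `p_r/q_r`,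
`p_{r+1}/q_{r+1}` differ from `P'/Q'`, and for that index `s` the nonzero integer `P' q_s - p_s Q'`
gives `1 ≤ |Q'| |q_s θ - p_s| + |q_s| |Q' θ - P'|`. The first term is below `1/2` by the choice of `r`,
so `|Q' θ - P'| > 1 / (2 |q_s|)`, and `|q_s| < k₀ Q ^ (r + 1)` with `Q ^ r = (E ^ r) ^ κ ≤ (2 l₀ E |Q'|) ^ κ`.
-/

lemma mul_ne_mul_or_mul_ne_mul {R : Type*} [CommRing R] [NoZeroDivisors R] {x₁ y₁ x₂ y₂ : R}
    (h : x₁ * y₂ ≠ x₂ * y₁) (a : R) {b : R} (hb : b ≠ 0) :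
    x₁ * b ≠ a * y₁ ∨ x₂ * b ≠ a * y₂ := by
  by_contra! ⟨h₁, h₂⟩
  exact h <| mul_right_cancel₀ hb <| by linear_combination y₂ * h₁ - y₁ * h₂

lemma one_le_abs_mul_add_abs_mul (θ : ℝ) {p₁ q₁ p₂ q₂ : ℤ} (h : p₁ * q₂ ≠ p₂ * q₁) :
    1 ≤ |(q₂ : ℝ)| * |q₁ * θ - p₁| + |(q₁ : ℝ)| * |q₂ * θ - p₂| := by
  calc (1 : ℝ) ≤ |((p₁ * q₂ - p₂ * q₁ : ℤ) : ℝ)| := by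
        exact_mod_cast Int.one_le_abs (sub_ne_zero.mpr h)
    _ = |q₁ * (q₂ * θ - p₂) - q₂ * (q₁ * θ - p₁)| := by push_cast; ring_nf
    _ ≤ |q₁ * (q₂ * θ - p₂)| + |q₂ * (q₁ * θ - p₁)| := abs_sub _ _
    _ = _ := by rw [abs_mul, abs_mul, add_comm]

lemma pow_le_rpow_log_div_log {E Q y : ℝ} (hE : 1 < E) (hQ : 1 ≤ Q) {r : ℕ} (hr : E ^ r ≤ y) :
    Q ^ r ≤ y ^ (Real.log Q / Real.log E) := by
  have hQE : E ^ (Real.log Q / Real.log E) = Q :=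
    Real.rpow_logb (by linarith) hE.ne' (by linarith)
  calc Q ^ r = (E ^ r) ^ (Real.log Q / Real.log E) := by
        rw [← Real.rpow_pow_comm (by linarith), hQE]
    _ ≤ y ^ (Real.log Q / Real.log E) := Real.rpow_le_rpow (by positivity) hr
        (div_nonneg (Real.log_nonneg hQ) (Real.log_nonneg hE.le))

theorem approximation_to_irrationality_measure (θ : ℝ) (k₀ l₀ E Q : ℝ)
    (hk₀ : 0 < k₀) (hl₀ : 0 < l₀) (hE : 1 < E) (hQ : 1 < Q)
    (p q : ℕ → ℤ)
    (hqbound : ∀ r : ℕ, |(q r : ℝ)| < k₀ * Q ^ r)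
    (happ : ∀ r : ℕ, |(q r : ℝ) * θ - (p r : ℝ)| ≤ l₀ / E ^ r)
    (hnondeg : ∀ r : ℕ, p r * q (r + 1) ≠ p (r + 1) * q r)
    (P' Q' : ℤ) (hQ' : 1 / (2 * l₀) ≤ |(Q' : ℝ)|) :
    1 / ((2 * k₀ * Q * (2 * l₀ * E) ^ (Real.log Q / Real.log E)) *
        |(Q' : ℝ)| ^ (Real.log Q / Real.log E + 1)) <
      |θ - (P' : ℝ) / (Q' : ℝ)| := by
  set κ := Real.log Q / Real.log E
  have hQ'pos : 0 < |(Q' : ℝ)| := (by positivity : (0 : ℝ) < 1 / (2 * l₀)).trans_le hQ'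
  have hQ'ne : (Q' : ℝ) ≠ 0 := abs_pos.mp hQ'pos
  obtain ⟨r, hr_le, hr_lt⟩ := exists_nat_pow_near (x := 2 * l₀ * |(Q' : ℝ)|)
    (by rwa [div_le_iff₀ (by positivity), mul_comm] at hQ') hE
  obtain ⟨s, hs_ge, hs_le, hs⟩ : ∃ s, r + 1 ≤ s ∧ s ≤ r + 2 ∧ p s * Q' ≠ P' * q s := by
    rcases mul_ne_mul_or_mul_ne_mul (hnondeg (r + 1)) P' (by exact_mod_cast hQ'ne) with h | h
    exacts [⟨r + 1, le_rfl, by omega, h⟩, ⟨r + 2, by omega, le_rfl, h⟩]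
  have hsmall : |(Q' : ℝ)| * |q s * θ - p s| < 1 / 2 := by
    have hEs : 2 * l₀ * |(Q' : ℝ)| < E ^ s := hr_lt.trans_le (pow_le_pow_right₀ hE.le hs_ge)
    calc |(Q' : ℝ)| * |q s * θ - p s| ≤ |(Q' : ℝ)| * (l₀ / E ^ s) := by gcongr; exact happ s
      _ < 1 / 2 := by rw [← mul_div_assoc, div_lt_iff₀ (by positivity)]; linarith
  have hlarge := one_le_abs_mul_add_abs_mul θ hs
  have hqs : |(q s : ℝ)| ≤ k₀ * (Q * ((2 * l₀ * E) ^ κ * |(Q' : ℝ)| ^ κ)) := by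
    have hQr : Q ^ (r + 1) ≤ (2 * l₀ * E) ^ κ * |(Q' : ℝ)| ^ κ := by
      rw [← Real.mul_rpow (by positivity) hQ'pos.le]
      exact pow_le_rpow_log_div_log hE hQ.le (by rw [pow_succ]; nlinarith)
    calc |(q s : ℝ)| ≤ k₀ * Q ^ (r + 2) :=
          (hqbound s).le.trans (by gcongr; exact hQ.le)
      _ = k₀ * (Q * Q ^ (r + 1)) := by ring
      _ ≤ _ := by gcongr
  rw [show θ - (P' : ℝ) / Q' = (Q' * θ - P') / Q' by field_simp, abs_div,
    Real.rpow_add_one hQ'pos.ne', div_lt_div_iff₀ (by positivity) hQ'pos]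
  have hX := mul_le_mul_of_nonneg_right hqs (abs_nonneg ((Q' : ℝ) * θ - P'))
  nlinarith
end

section
/- Let m and n be positive integers and α a real number. Define the polynomials p_m(X) = Σ_{ν=0}^{m} C(m-α, m-ν)·C(n+α, ν)·X^ν and q_n(X) = Σ_{ν=0}^{n} C(m-α, ν)·C(n+α, n-ν)·X^ν, where C(β,k) = β(β-1)···(β-k+1)/k! denotes the generalized binomial coefficient. Let x be a complex number such that the closed straight-line segment C from 1 to x does not meet the closed negative real axis (-∞,0], and let all complex powers denote principal branches. Then x^α·q_n(x) - p_m(x) = α·C(m-α, m)·C(n+α, n)·∫_C (t-x)^m·(1-t)^n·t^{α-m-1} dt, the integral being taken along the straight line from 1 to x. -/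
/-!
Put `c = α - m` and `K = α C(m-α, m) C(n+α, n)`. If a polynomial `H` satisfies
`c H(t) + t H'(t) = K (t-x)^m (1-t)^n`, then `t^c H(t)` is a primitive of
`K (t-x)^m (1-t)^n t^(c-1)` along the segment, so the integral is `x^c H(x) - H(1)`.
The coefficient of `t^k` in `H` is `K / (c+k)` times that of `(t-x)^m (1-t)^n`; as
`K = (-1)^m / (m! n!) ∏_{l ≤ m+n} (c+l)`, this quotient is the same product with the factor
`c+k` left out, which makes sense also when `c+k = 0`. Evaluating `H` at `t = x` and at `t = 1`
produces alternating binomial sums of these products, i.e. iterated forward differences, and the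
`w`-th forward difference of `k ↦ ∏_{l ≠ k} (c+l)` is `(-1)^w w!` times the product with the
whole window `k, …, k+w` left out. Rewriting the remaining products as generalized binomial
coefficients gives `H(x) = x^m q_n(x)` and `H(1) = p_m(x)`.
-/

/-- Generalized binomial coefficient `C(β, k) = β(β-1)⋯(β-k+1)/k!`. -/
noncomputable def genChoose (β : ℝ) (k : ℕ) : ℝ :=
  (∏ i ∈ Finset.range k, (β - i)) / (Nat.factorial k)

open Finset Complex fwdDiff
open scoped Nat

lemma neg_one_pow_mul_self (R : Type*) [Monoid R] [HasDistribNeg R] (k : ℕ) :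
    (-1 : R) ^ k * (-1) ^ k = 1 := by
  rw [← pow_add, ← two_mul, pow_mul, neg_one_sq, one_pow]

lemma mul_natCast_mul_pow_sub_one {R : Type*} [CommSemiring R] (t : R) (k : ℕ) :
    t * (k * t ^ (k - 1)) = k * t ^ k := by
  rcases Nat.eq_zero_or_pos k with rfl | hk
  · simp
  · rw [mul_left_comm, mul_pow_sub_one hk.ne']

lemma fwdDiff_iter_eq_neg_one_pow_mul_sum {R : Type*} [CommRing R] (f : ℕ → R) (w y : ℕ) :
    (Δ_[1])^[w] f y = (-1) ^ w * ∑ k ∈ range (w + 1), (-1) ^ k * w.choose k * f (y + k) := by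
  rw [fwdDiff_iter_eq_sum_shift, mul_sum]
  refine sum_congr rfl fun k hk ↦ ?_
  rw [zsmul_eq_mul, smul_eq_mul, mul_one, ← pow_sub_mul_pow (-1 : R) (mem_range_succ_iff.mp hk)]
  push_cast
  linear_combination -(-1 : R) ^ (w - k) * w.choose k * f (y + k) * neg_one_pow_mul_self R k

section ProdOutside

variable {R : Type*} [CommRing R]

def prodOutside (z : R) (M j w : ℕ) : R :=
  (∏ l ∈ range j, (z + l)) * ∏ l ∈ Ico (j + w + 1) (M + 1), (z + l)

lemma prodOutside_succ_sub (z : R) {M j w : ℕ} (h : j + w + 1 ≤ M) :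
    prodOutside z M (j + 1) w - prodOutside z M j w = -(w + 1) * prodOutside z M j (w + 1) := by
  rw [prodOutside, prodOutside, prodOutside, prod_range_succ,
    prod_eq_prod_Ico_succ_bot (show j + w + 1 < M + 1 by omega),
    show j + 1 + w + 1 = j + w + 1 + 1 by omega, show j + (w + 1) + 1 = j + w + 1 + 1 by omega]
  push_cast
  ring

lemma fwdDiff_iter_prodOutside (z : R) {M : ℕ} (w : ℕ) {j : ℕ} (h : j + w ≤ M) :
    (Δ_[1])^[w] (fun k ↦ prodOutside z M k 0) j = (-1) ^ w * w ! * prodOutside z M j w := by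
  induction w generalizing j with
  | zero => simp
  | succ w ih =>
    rw [Function.iterate_succ_apply', fwdDiff, ih (by omega), ih (by omega), ← mul_sub,
      prodOutside_succ_sub z (by omega), Nat.factorial_succ]
    push_cast
    ring

lemma add_natCast_mul_prodOutside_zero (z : R) {M k : ℕ} (h : k ≤ M) :
    (z + k) * prodOutside z M k 0 = ∏ l ∈ range (M + 1), (z + l) := by
  rw [prodOutside, ← prod_range_mul_prod_Ico _ (show k ≤ M + 1 by omega),
    prod_eq_prod_Ico_succ_bot (show k < M + 1 by omega)]
  ring

end ProdOutside

lemma hasDerivAt_cpow_const_mul {H : ℂ → ℂ} {H' t : ℂ} (c : ℂ) (ht : t ∈ slitPlane)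
    (hH : HasDerivAt H H' t) :
    HasDerivAt (fun u ↦ u ^ c * H u) (t ^ (c - 1) * (c * H t + t * H')) t := by
  refine (((hasDerivAt_id t).cpow_const (c := c) ht).mul hH).congr_deriv ?_
  have ht0 := slitPlane_ne_zero ht
  rw [id_eq, cpow_sub _ _ ht0, cpow_one]
  field_simp

lemma mul_integral_segment_eq_sub_of_hasDerivAt {f f' : ℂ → ℂ} {a b : ℂ}
    (hf : ∀ s ∈ Set.Icc (0 : ℝ) 1, HasDerivAt f (f' (a + s * (b - a))) (a + s * (b - a)))
    (hf' : ContinuousOn (fun s : ℝ ↦ f' (a + s * (b - a))) (Set.Icc 0 1)) :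
    (b - a) * ∫ s in (0 : ℝ)..1, f' (a + s * (b - a)) = f b - f a := by
  rw [← Set.uIcc_of_le zero_le_one] at hf hf'
  have hderiv : ∀ s ∈ Set.uIcc (0 : ℝ) 1, HasDerivAt (fun s : ℝ ↦ f (a + s * (b - a)))
      ((b - a) * f' (a + s * (b - a))) s := by
    intro s hs
    have hγ : HasDerivAt (fun w : ℂ ↦ a + w * (b - a)) (b - a) s := by
      simpa using ((hasDerivAt_id (s : ℂ)).mul_const (b - a)).const_add a
    simpa [mul_comm] using ((hf s hs).comp (s : ℂ) hγ).comp_ofReal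
  rw [← intervalIntegral.integral_const_mul]
  simpa using intervalIntegral.integral_eq_sub_of_hasDerivAt hderiv
    (continuousOn_const.mul hf').intervalIntegrable

lemma genChoose_mul_factorial (β : ℝ) (k : ℕ) :
    genChoose β k * k ! = ∏ i ∈ range k, (β - i) :=
  div_mul_cancel₀ _ (by positivity)

lemma prod_range_add_natCast (z : ℝ) (k : ℕ) :
    ∏ l ∈ range k, (z + l) = (-1) ^ k * k ! * genChoose (-z) k := by
  rw [mul_assoc, mul_comm (k ! : ℝ), genChoose_mul_factorial, ← card_range k, ← prod_const,
    card_range, ← prod_mul_distrib]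
  exact prod_congr rfl fun l _ ↦ by ring

lemma prod_Ico_add_natCast (z : ℝ) {a N : ℕ} (h : a ≤ N + 1) :
    ∏ l ∈ Ico a (N + 1), (z + l) = (N + 1 - a)! * genChoose (z + N) (N + 1 - a) := by
  rw [mul_comm, genChoose_mul_factorial, prod_Ico_eq_prod_range,
    ← prod_range_reflect (fun i : ℕ ↦ z + N - i)]
  refine prod_congr rfl fun i hi ↦ ?_
  have hi := mem_range.mp hi
  rw [show N + 1 - a - 1 - i = N - (a + i) by omega, Nat.cast_sub (by omega)]
  push_cast
  ring

lemma prodOutside_eq_genChoose (m n : ℕ) (α : ℝ) {j w : ℕ} (h : j + w ≤ m + n) :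
    prodOutside (α - m) (m + n) j w =
      (-1) ^ j * j ! * genChoose (m - α) j *
        ((m + n - j - w)! * genChoose (n + α) (m + n - j - w)) := by
  rw [prodOutside, prod_range_add_natCast, prod_Ico_add_natCast _ (by omega), neg_sub,
    show m + n + 1 - (j + w + 1) = m + n - j - w by omega]
  congr 3
  push_cast
  ring

noncomputable def padeCoeff (m n : ℕ) (α : ℝ) (k : ℕ) : ℝ :=
  (-1) ^ m / (m ! * n !) * prodOutside (α - m) (m + n) k 0

lemma sub_add_natCast_mul_padeCoeff (m n : ℕ) (α : ℝ) {k : ℕ} (hk : k ≤ m + n) :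
    (α - m + k) * padeCoeff m n α k = α * genChoose (m - α) m * genChoose (n + α) n := by
  rw [padeCoeff, mul_left_comm, add_natCast_mul_prodOutside_zero _ hk,
    ← add_natCast_mul_prodOutside_zero _ (show m ≤ m + n by omega),
    prodOutside_eq_genChoose m n α (by omega), show m + n - m - 0 = n by omega]
  field_simp
  rw [← pow_mul, pow_mul', neg_one_sq, one_pow]
  ring

lemma fwdDiff_iter_padeCoeff (m n : ℕ) (α : ℝ) {j w : ℕ} (h : j + w ≤ m + n) :
    (Δ_[1])^[w] (padeCoeff m n α) j =
      (-1) ^ m / (m ! * n !) * ((-1) ^ w * w ! * prodOutside (α - m) (m + n) j w) := by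
  rw [← fwdDiff_iter_prodOutside _ _ h, show padeCoeff m n α =
    ((-1) ^ m / (m ! * n !) : ℝ) • fun k ↦ prodOutside (α - m) (m + n) k 0 from rfl,
    fwdDiff_iter_const_smul]
  rfl

lemma fwdDiff_iter_padeCoeff_eq_denom (m n : ℕ) (α : ℝ) {j : ℕ} (hj : j ≤ n) :
    (-1) ^ j * n.choose j * (Δ_[1])^[m] (padeCoeff m n α) j =
      genChoose (m - α) j * genChoose (n + α) (n - j) := by
  have hfac : (n.choose j * j ! * (n - j)! : ℝ) = n ! := by
    exact_mod_cast Nat.choose_mul_factorial_mul_factorial hj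
  rw [fwdDiff_iter_padeCoeff m n α (by omega), prodOutside_eq_genChoose m n α (by omega),
    show m + n - j - m = n - j by omega]
  field_simp
  linear_combination (genChoose (m - α) j * genChoose (n + α) (n - j)) *
    (((-1) ^ j * (-1) ^ j * (-1) ^ m * (-1) ^ m) * hfac + n ! * (-1) ^ j * (-1) ^ j *
      neg_one_pow_mul_self ℝ m + n ! * neg_one_pow_mul_self ℝ j)

lemma fwdDiff_iter_padeCoeff_eq_num (m n : ℕ) (α : ℝ) {i : ℕ} (hi : i ≤ m) :
    (-1) ^ (m - i + n) * m.choose i * (Δ_[1])^[n] (padeCoeff m n α) i =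
      genChoose (m - α) i * genChoose (n + α) (m - i) := by
  have hfac : (m.choose i * i ! * (m - i)! : ℝ) = m ! := by
    exact_mod_cast Nat.choose_mul_factorial_mul_factorial hi
  have hsign : (-1 : ℝ) ^ (m - i) * (-1) ^ (n * 2) * (-1) ^ m * (-1) ^ i = 1 := by
    rw [← pow_add, ← pow_add, ← pow_add, show m - i + n * 2 + m + i = 2 * (m + n) by omega,
      pow_mul, neg_one_sq, one_pow]
  rw [fwdDiff_iter_padeCoeff m n α (by omega), prodOutside_eq_genChoose m n α (by omega),
    show m + n - i - n = m - i by omega]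
  field_simp
  linear_combination (genChoose (m - α) i * genChoose (n + α) (m - i)) *
    (hfac * (-1) ^ (m - i) * (-1) ^ (n * 2) * (-1) ^ m * (-1) ^ i + m ! * hsign)

noncomputable def padePrimitive (m n : ℕ) (α : ℝ) (x t : ℂ) : ℂ :=
  ∑ i ∈ range (m + 1), ∑ j ∈ range (n + 1),
    m.choose i * (-x) ^ (m - i) * (n.choose j * (-1) ^ j) * padeCoeff m n α (i + j) * t ^ (i + j)

lemma padePrimitive_apply_self (m n : ℕ) (α : ℝ) (x : ℂ) :
    padePrimitive m n α x x = x ^ m * ∑ ν ∈ range (n + 1),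
      ((genChoose (m - α) ν * genChoose (n + α) (n - ν) : ℝ) : ℂ) * x ^ ν := by
  rw [padePrimitive, sum_comm, mul_sum]
  refine sum_congr rfl fun j hj ↦ ?_
  rw [← fwdDiff_iter_padeCoeff_eq_denom m n α (mem_range_succ_iff.mp hj),
    fwdDiff_iter_eq_neg_one_pow_mul_sum]
  push_cast
  rw [mul_sum, mul_sum, sum_mul, mul_sum]
  refine sum_congr rfl fun i hi ↦ ?_
  have hi := mem_range_succ_iff.mp hi
  rw [add_comm j i, neg_pow x, ← pow_sub_mul_pow x hi, ← pow_sub_mul_pow (-1 : ℂ) hi, pow_add]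
  linear_combination -(m.choose i * (-1) ^ (m - i) * x ^ (m - i) * (n.choose j * (-1) ^ j) *
    padeCoeff m n α (i + j) * x ^ i * x ^ j : ℂ) * neg_one_pow_mul_self ℂ i

lemma padePrimitive_apply_one (m n : ℕ) (α : ℝ) (x : ℂ) :
    padePrimitive m n α x 1 = ∑ ν ∈ range (m + 1),
      ((genChoose (m - α) (m - ν) * genChoose (n + α) ν : ℝ) : ℂ) * x ^ ν := by
  rw [padePrimitive]
  conv_rhs => rw [← sum_range_reflect]
  refine sum_congr rfl fun i hi ↦ ?_
  have hi := mem_range_succ_iff.mp hi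
  rw [show m + 1 - 1 - i = m - i by omega, Nat.sub_sub_self hi,
    ← fwdDiff_iter_padeCoeff_eq_num m n α hi, fwdDiff_iter_eq_neg_one_pow_mul_sum]
  push_cast
  rw [mul_sum, mul_sum, sum_mul]
  refine sum_congr rfl fun j hj ↦ ?_
  rw [one_pow, neg_pow x, pow_add]
  linear_combination -(m.choose i * (-1) ^ (m - i) * x ^ (m - i) * (n.choose j * (-1) ^ j) *
    padeCoeff m n α (i + j) : ℂ) * neg_one_pow_mul_self ℂ n

lemma hasDerivAt_cpow_mul_padePrimitive (m n : ℕ) (α : ℝ) (x : ℂ) {t : ℂ}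
    (ht : t ∈ slitPlane) :
    HasDerivAt (fun u ↦ u ^ ((α : ℂ) - m) * padePrimitive m n α x u)
      (((α * genChoose (m - α) m * genChoose (n + α) n : ℝ) : ℂ) *
        ((t - x) ^ m * (1 - t) ^ n * t ^ ((α : ℂ) - m - 1))) t := by
  set a : ℕ → ℕ → ℂ := fun i j ↦ m.choose i * (-x) ^ (m - i) * (n.choose j * (-1) ^ j) *
    padeCoeff m n α (i + j)
  set H' := ∑ i ∈ range (m + 1), ∑ j ∈ range (n + 1),
    a i j * ((i + j : ℕ) * t ^ (i + j - 1)) with hH'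
  have hH : HasDerivAt (padePrimitive m n α x) H' t :=
    HasDerivAt.fun_sum fun i _ ↦ HasDerivAt.fun_sum fun j _ ↦ (hasDerivAt_pow _ t).const_mul _
  have heuler : ((α : ℂ) - m) * padePrimitive m n α x t + t * H' =
      ((α * genChoose (m - α) m * genChoose (n + α) n : ℝ) : ℂ) *
        ((t - x) ^ m * (1 - t) ^ n) := by
    rw [hH', sub_eq_add_neg t x, sub_eq_neg_add (1 : ℂ) t, add_pow, add_pow, sum_mul_sum,
      padePrimitive, mul_sum, mul_sum, mul_sum, ← sum_add_distrib]
    refine sum_congr rfl fun i hi ↦ ?_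
    rw [mul_sum, mul_sum, mul_sum, ← sum_add_distrib]
    refine sum_congr rfl fun j hj ↦ ?_
    have hcoeff := congrArg ((↑) : ℝ → ℂ) (sub_add_natCast_mul_padeCoeff m n α
      (show i + j ≤ m + n by simp only [mem_range_succ_iff] at hi hj; omega))
    push_cast at hcoeff
    rw [mul_left_comm t (a i j), mul_natCast_mul_pow_sub_one, neg_pow t, one_pow, pow_add]
    push_cast
    linear_combination m.choose i * (-x) ^ (m - i) * (n.choose j * (-1) ^ j) * t ^ i * t ^ j *
      hcoeff
  convert hasDerivAt_cpow_const_mul _ ht hH using 1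
  rw [heuler]
  ring

theorem pade_remainder_integral_general (m n : ℕ) (α : ℝ) (x : ℂ)
    (hpath : ∀ s : ℝ, s ∈ Set.Icc (0 : ℝ) 1 →
      ¬((1 + (s : ℂ) * (x - 1)).im = 0 ∧ (1 + (s : ℂ) * (x - 1)).re ≤ 0)) :
    x ^ (α : ℂ) * (∑ ν ∈ Finset.range (n + 1),
        ((genChoose ((m : ℝ) - α) ν * genChoose ((n : ℝ) + α) (n - ν) : ℝ) : ℂ) * x ^ ν) -
      (∑ ν ∈ Finset.range (m + 1),
        ((genChoose ((m : ℝ) - α) (m - ν) * genChoose ((n : ℝ) + α) ν : ℝ) : ℂ) * x ^ ν) =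
    ((α * genChoose ((m : ℝ) - α) m * genChoose ((n : ℝ) + α) n : ℝ) : ℂ) *
      ((x - 1) * ∫ s in (0 : ℝ)..1,
        ((1 + (s : ℂ) * (x - 1)) - x) ^ m * (1 - (1 + (s : ℂ) * (x - 1))) ^ n *
          (1 + (s : ℂ) * (x - 1)) ^ ((α : ℂ) - m - 1)) := by
  have hseg : ∀ s ∈ Set.Icc (0 : ℝ) 1, 1 + (s : ℂ) * (x - 1) ∈ slitPlane := fun s hs ↦
    mem_slitPlane_iff_not_le_zero.2 fun h ↦ hpath s hs ⟨(le_def.1 h).2, (le_def.1 h).1⟩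
  have hx0 : x ≠ 0 := slitPlane_ne_zero (by simpa using hseg 1 (by simp))
  have hcont : ContinuousOn (fun s : ℝ ↦
      ((1 + (s : ℂ) * (x - 1)) - x) ^ m * (1 - (1 + (s : ℂ) * (x - 1))) ^ n *
        (1 + (s : ℂ) * (x - 1)) ^ ((α : ℂ) - m - 1)) (Set.Icc 0 1) :=
    (Continuous.continuousOn (by fun_prop)).mul
      ((Continuous.continuousOn (by fun_prop)).cpow_const hseg)
  have hFTC := mul_integral_segment_eq_sub_of_hasDerivAt (a := 1) (b := x)
    (f' := fun t ↦ ((α * genChoose (m - α) m * genChoose (n + α) n : ℝ) : ℂ) *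
      ((t - x) ^ m * (1 - t) ^ n * t ^ ((α : ℂ) - m - 1)))
    (fun s hs ↦ hasDerivAt_cpow_mul_padePrimitive m n α x (hseg s hs))
    (continuousOn_const.mul hcont)
  have hpow : x ^ ((α : ℂ) - m) * x ^ m = x ^ (α : ℂ) := by
    rw [← cpow_natCast, ← cpow_add _ _ hx0, sub_add_cancel]
  rw [intervalIntegral.integral_const_mul, padePrimitive_apply_self, padePrimitive_apply_one,
    one_cpow, one_mul, ← mul_assoc (x ^ _), hpow] at hFTC
  rw [← hFTC]
  ring

theorem pade_remainder_integral (m n : ℕ) (hm : 0 < m) (hn : 0 < n) (α : ℝ) (x : ℂ)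
    (hpath : ∀ s : ℝ, s ∈ Set.Icc (0 : ℝ) 1 →
      ¬((1 + (s : ℂ) * (x - 1)).im = 0 ∧ (1 + (s : ℂ) * (x - 1)).re ≤ 0)) :
    x ^ (α : ℂ) * (∑ ν ∈ Finset.range (n + 1),
        ((genChoose ((m : ℝ) - α) ν * genChoose ((n : ℝ) + α) (n - ν) : ℝ) : ℂ) * x ^ ν) -
      (∑ ν ∈ Finset.range (m + 1),
        ((genChoose ((m : ℝ) - α) (m - ν) * genChoose ((n : ℝ) + α) ν : ℝ) : ℂ) * x ^ ν) =
    ((α * genChoose ((m : ℝ) - α) m * genChoose ((n : ℝ) + α) n : ℝ) : ℂ) *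
      ((x - 1) * ∫ s in (0 : ℝ)..1,
        ((1 + (s : ℂ) * (x - 1)) - x) ^ m * (1 - (1 + (s : ℂ) * (x - 1))) ^ n *
          (1 + (s : ℂ) * (x - 1)) ^ ((α : ℂ) - m - 1)) :=
  pade_remainder_integral_general m n α x hpath
end

section
/- Let j = 1 or j = -1, let n and r be positive integers, and set μ_n = Π_{p prime, p | n} p^{1/(p-1)} (a positive real algebraic number). Then for every integer s with 0 ≤ s ≤ r, the real number (μ_n^s / s!) · (Π_{k=r-s+1}^{r} (k·n - j)) · C(2r-s, r) is an algebraic integer (i.e., integral over ℤ). Consequently, all coefficients of the polynomial C(2r,r)·₂F₁(-r, -r+j/n, -2r; n·μ_n·X), whose coefficient of X^s equals (-1)^s·(μ_n^s/s!)·(Π_{k=r-s+1}^{r}(kn-j))·C(2r-s, r), are algebraic integers. -/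
/-!
Put `L = ∏_{p ∣ n} (p - 1)`. Then `μ_n ^ L = ∏_{p ∣ n} p ^ (L / (p - 1))` is an integer, so it
suffices that the `L`-th power of the coefficient is an integer, i.e. that `(s!) ^ L` divides
`μ_n ^ (s L) · (∏ (k n - j)) ^ L`. Split `s! = A B` into its part `A` supported on the primes of
`n` and a part `B` coprime to `n`. Legendre's bound `v_p(s!) ≤ s / (p - 1)` gives
`A ^ L ∣ μ_n ^ (s L)`. As `n` is invertible modulo `B`, the `s` consecutive terms `k n - j` of the
progression are, modulo `B`, `n ^ s` times a product of `s` consecutive integers, which `s!`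
and hence `B` divides.
-/

open Finset
open scoped Nat

theorem Int.factorial_dvd_prod_range_sub (c : ℤ) (s : ℕ) :
    (s ! : ℤ) ∣ ∏ i ∈ Finset.range s, (c - i) := by
  rw [← descPochhammer_eval_eq_prod_range, Polynomial.eval_eq_smeval,
    Ring.descPochhammer_eq_factorial_smul_choose, nsmul_eq_mul]
  exact dvd_mul_right _ _

theorem Int.dvd_prod_range_sub_mul {m : ℤ} {s : ℕ} (hm : m ∣ s !) {d : ℤ} (hd : IsCoprime d m)
    (a : ℤ) : m ∣ ∏ i ∈ Finset.range s, (a - i * d) := by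
  obtain ⟨u, v, huv⟩ := hd
  have hmod : ∏ i ∈ Finset.range s, (a - i * d) ≡
      ∏ i ∈ Finset.range s, d * (u * a - i) [ZMOD m] :=
    Int.ModEq.prod fun i _ => Int.modEq_iff_dvd.mpr ⟨-v * a, by linear_combination a * huv⟩
  rw [prod_mul_distrib, prod_const, card_range] at hmod
  exact (Int.ModEq.dvd_iff hmod).mpr
    (dvd_mul_of_dvd_right (hm.trans (Int.factorial_dvd_prod_range_sub _ _)))

theorem Finset.prod_Icc_sub_add_one_eq_prod_range {M : Type*} [CommMonoid M] (f : ℕ → M)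
    {r s : ℕ} (hs : s ≤ r) : ∏ k ∈ Icc (r - s + 1) r, f k = ∏ i ∈ range s, f (r - i) := by
  rw [← Ico_add_one_right_eq_Icc, prod_Ico_eq_prod_range, ← prod_range_reflect,
    show r + 1 - (r - s + 1) = s by omega]
  exact prod_congr rfl fun i hi => congrArg f (by rw [mem_range] at hi; omega)

theorem Nat.factorization_factorial_mul_le {p L : ℕ} (hp : p.Prime) (hL : p - 1 ∣ L) (s : ℕ) :
    (s !).factorization p * L ≤ s * (L / (p - 1)) := by
  obtain ⟨c, rfl⟩ := hL
  have hp1 : 0 < p - 1 := Nat.sub_pos_of_lt hp.one_lt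
  have hle : (s !).factorization p * (p - 1) ≤ s :=
    (Nat.le_div_iff_mul_le hp1).mp (Nat.factorization_factorial_le_div_pred hp s)
  rw [Nat.mul_div_cancel_left _ hp1, ← mul_assoc]
  exact Nat.mul_le_mul_right c hle

theorem Real.rpow_one_div_sub_one_pow {p L : ℕ} (hp : p.Prime) (hL : p - 1 ∣ L) :
    ((p : ℝ) ^ (1 / ((p : ℝ) - 1))) ^ L = ((p ^ (L / (p - 1)) : ℕ) : ℝ) := by
  obtain ⟨c, rfl⟩ := hL
  have hp1 : 0 < p - 1 := Nat.sub_pos_of_lt hp.one_lt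
  have hcast : (p : ℝ) - 1 = ((p - 1 : ℕ) : ℝ) := by rw [Nat.cast_sub hp.one_le, Nat.cast_one]
  rw [Nat.mul_div_cancel_left _ hp1, pow_mul, hcast, one_div,
    Real.rpow_inv_natCast_pow (Nat.cast_nonneg p) hp1.ne', Nat.cast_pow]

theorem factorial_pow_dvd_prod_pow_mul_prod_range_sub_pow {n L : ℕ} (hn : n ≠ 0)
    (hL : ∀ p ∈ n.primeFactors, p - 1 ∣ L) (s : ℕ) (a : ℤ) :
    (s ! : ℤ) ^ L ∣
      ((∏ p ∈ n.primeFactors, p ^ (L / (p - 1)) : ℕ) : ℤ) ^ s *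
        (∏ i ∈ Finset.range s, (a - i * n)) ^ L := by
  set e := (s !).factorization
  set A := ∏ q ∈ (s !).primeFactors with q ∣ n, q ^ e q
  set B := ∏ q ∈ (s !).primeFactors with ¬q ∣ n, q ^ e q
  have hAB : A * B = s ! := by
    rw [prod_filter_mul_prod_filter_not, ← Nat.support_factorization]
    exact Nat.prod_factorization_pow_eq_self s.factorial_ne_zero
  have hsub : {q ∈ (s !).primeFactors | q ∣ n} ⊆ n.primeFactors := fun q hq => by
    obtain ⟨hq, hqn⟩ := mem_filter.mp hq
    exact Nat.mem_primeFactors.mpr ⟨Nat.prime_of_mem_primeFactors hq, hqn, hn⟩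
  have hA : A ^ L ∣ (∏ p ∈ n.primeFactors, p ^ (L / (p - 1))) ^ s := by
    simp only [A, ← prod_pow, ← pow_mul]
    refine (prod_dvd_prod_of_dvd _ _ fun q hq => pow_dvd_pow q ?_).trans
      (prod_dvd_prod_of_subset _ _ _ hsub)
    rw [mul_comm _ s]
    exact Nat.factorization_factorial_mul_le (Nat.prime_of_mem_primeFactors (hsub hq))
      (hL q (hsub hq)) s
  have hB : (B : ℤ) ∣ ∏ i ∈ Finset.range s, (a - i * n) := by
    refine Int.dvd_prod_range_sub_mul (Int.natCast_dvd_natCast.mpr (hAB ▸ dvd_mul_left B A)) ?_ a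
    refine Nat.isCoprime_iff_coprime.mpr (Nat.Coprime.prod_right fun q hq => ?_)
    obtain ⟨hq, hqn⟩ := mem_filter.mp hq
    exact Nat.Coprime.pow_right _
      ((Nat.Prime.coprime_iff_not_dvd (Nat.prime_of_mem_primeFactors hq)).mpr hqn).symm
  rw [← hAB, Nat.cast_mul, mul_pow]
  exact mul_dvd_mul (by exact_mod_cast hA) (pow_dvd_pow_of_dvd hB L)

theorem isIntegral_prod_rpow_pow_div_factorial_mul_prod_range_sub {n : ℕ} (hn : n ≠ 0) (s : ℕ)
    (a : ℤ) :
    IsIntegral ℤ ((∏ p ∈ n.primeFactors, (p : ℝ) ^ ((1 : ℝ) / ((p : ℝ) - 1))) ^ s / s ! *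
      ∏ i ∈ Finset.range s, ((a : ℝ) - i * n)) := by
  set μ := ∏ p ∈ n.primeFactors, (p : ℝ) ^ ((1 : ℝ) / ((p : ℝ) - 1))
  set L := ∏ p ∈ n.primeFactors, (p - 1)
  have hL : ∀ p ∈ n.primeFactors, p - 1 ∣ L := fun p hp => dvd_prod_of_mem _ hp
  have hL0 : 0 < L :=
    prod_pos fun p hp => Nat.sub_pos_of_lt (Nat.prime_of_mem_primeFactors hp).one_lt
  set Q : ℕ := ∏ p ∈ n.primeFactors, p ^ (L / (p - 1))
  have hμL : μ ^ L = Q := by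
    rw [← prod_pow, Nat.cast_prod]
    exact prod_congr rfl fun p hp =>
      Real.rpow_one_div_sub_one_pow (Nat.prime_of_mem_primeFactors hp) (hL p hp)
  set P : ℤ := ∏ i ∈ Finset.range s, (a - i * n)
  obtain ⟨m, hm⟩ := factorial_pow_dvd_prod_pow_mul_prod_range_sub_pow hn hL s a
  have hm' : (Q : ℝ) ^ s * (P : ℝ) ^ L = (s ! : ℝ) ^ L * m := by
    exact_mod_cast congrArg (Int.cast : ℤ → ℝ) hm
  have hP : ∏ i ∈ Finset.range s, ((a : ℝ) - i * n) = P := by push_cast [P]; rfl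
  refine IsIntegral.of_pow hL0 ?_
  have hpow : (μ ^ s / s ! * P) ^ L = m := by
    rw [mul_pow, div_pow, ← pow_mul, mul_comm s, pow_mul, hμL]
    field_simp
    exact hm'
  rw [hP, hpow]
  exact isIntegral_algebraMap

theorem hypergeometric_coefficients_algebraic_integers_general (j : ℤ)
    (n r : ℕ) (hn : 0 < n) (μ : ℝ)
    (hμ : μ = ∏ p ∈ n.primeFactors, (p : ℝ) ^ ((1 : ℝ) / ((p : ℝ) - 1))) :
    ∀ s : ℕ, s ≤ r →
      IsIntegral ℤ ((μ ^ s / (Nat.factorial s : ℝ)) *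
        (∏ k ∈ Finset.Icc (r - s + 1) r, ((k : ℝ) * (n : ℝ) - (j : ℝ))) *
        (Nat.choose (2 * r - s) r : ℝ)) ∧
      IsIntegral ℤ ((-1 : ℝ) ^ s * (μ ^ s / (Nat.factorial s : ℝ)) *
        (∏ k ∈ Finset.Icc (r - s + 1) r, ((k : ℝ) * (n : ℝ) - (j : ℝ))) *
        (Nat.choose (2 * r - s) r : ℝ)) := by
  intro s hs
  have hP : ∏ k ∈ Icc (r - s + 1) r, ((k : ℝ) * n - j) =
      ∏ i ∈ Finset.range s, (((r * n - j : ℤ) : ℝ) - i * n) := by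
    rw [prod_Icc_sub_add_one_eq_prod_range _ hs]
    refine prod_congr rfl fun i hi => ?_
    rw [Nat.cast_sub (by rw [mem_range] at hi; omega)]
    push_cast
    ring
  have hint := (isIntegral_prod_rpow_pow_div_factorial_mul_prod_range_sub hn.ne' s
    (r * n - j)).mul (isIntegral_natCast (R := ℤ) (B := ℝ) ((2 * r - s).choose r))
  rw [hP, hμ]
  exact ⟨hint, by simpa only [mul_assoc] using (isIntegral_one.neg.pow s).mul hint⟩

theorem hypergeometric_coefficients_algebraic_integers (j : ℤ) (hj : j = 1 ∨ j = -1)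
    (n r : ℕ) (hn : 0 < n) (hr : 0 < r) (μ : ℝ)
    (hμ : μ = ∏ p ∈ n.primeFactors, (p : ℝ) ^ ((1 : ℝ) / ((p : ℝ) - 1))) :
    ∀ s : ℕ, s ≤ r →
      IsIntegral ℤ ((μ ^ s / (Nat.factorial s : ℝ)) *
        (∏ k ∈ Finset.Icc (r - s + 1) r, ((k : ℝ) * (n : ℝ) - (j : ℝ))) *
        (Nat.choose (2 * r - s) r : ℝ)) ∧
      IsIntegral ℤ ((-1 : ℝ) ^ s * (μ ^ s / (Nat.factorial s : ℝ)) *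
        (∏ k ∈ Finset.Icc (r - s + 1) r, ((k : ℝ) * (n : ℝ) - (j : ℝ))) *
        (Nat.choose (2 * r - s) r : ℝ)) :=
  hypergeometric_coefficients_algebraic_integers_general j n r hn μ hμ
end

section
/- Let n and r be positive integers, let 0 < φ < π, put w = e^{iφ} and √w = e^{iφ/2}, and define R_{n,r}(x) = (Γ(r+1+1/n)/(r!·Γ(1/n)))·∫₁^x (1-t)^r·(t-x)^r·t^{-(r+1-1/n)} dt, where the integration path is the straight line from 1 to x and t^{-(r+1-1/n)} is the principal branch. Then |R_{n,r}(w)| ≤ (Γ(r+1+1/n)/(r!·Γ(1/n)))·φ·|1-√w|^{2r}. -/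
/-!
The integrand `(1 - t)^r (t - w)^r t^{-c}` has a primitive on the slit plane (integrate
monomial by monomial), so its integral along the segment from `1` to `w = e^{iφ}` equals its
integral along the arc `θ ↦ e^{iθ}`, `0 ≤ θ ≤ φ`. On that arc `|t^{-c}| = 1` and
`|1 - t|·|t - w| = 4 sin(θ/2) sin((φ-θ)/2) ≤ 4 sin²(φ/4) = |1 - √w|²`, which bounds the arc
integral by `φ·|1 - √w|^{2r}`.
-/

/-- The point `1 + s(x-1)` on the straight segment from `1` to `x`. -/
noncomputable def seg (x : ℂ) (s : ℝ) : ℂ := 1 + (s : ℂ) * (x - 1)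

/-- `R_{n,r}(x) = Γ(r+1+1/n)/(r!·Γ(1/n)) · ∫₁ˣ (1-t)^r (t-x)^r t^{-(r+1-1/n)} dt`,
the integral being taken along the straight line from `1` to `x`
(principal branch of the complex power). -/
noncomputable def Rnr (n r : ℕ) (x : ℂ) : ℂ :=
  ((Real.Gamma ((r : ℝ) + 1 + 1 / (n : ℝ)) /
      ((Nat.factorial r : ℝ) * Real.Gamma (1 / (n : ℝ)))) : ℝ) *
    ((x - 1) * ∫ s in (0 : ℝ)..1,
      (1 - seg x s) ^ r * (seg x s - x) ^ r *
        (seg x s) ^ (-((r : ℂ) + 1 - 1 / (n : ℂ))))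

open Complex Polynomial Set
open scoped Real

theorem exists_primitive_eval_mul_cpow (c : ℂ) (Q : ℂ[X]) :
    ∃ F : ℂ → ℂ, ∀ t ∈ slitPlane, HasDerivAt F (Q.eval t * t ^ (-c)) t := by
  induction Q using Polynomial.induction_on' with
  | add p q hp hq =>
    obtain ⟨F, hF⟩ := hp
    obtain ⟨G, hG⟩ := hq
    exact ⟨F + G, fun t ht => by simpa [add_mul] using (hF t ht).add (hG t ht)⟩
  | monomial m a =>
    have eval_eq : ∀ t ∈ slitPlane,
        (monomial m a).eval t * t ^ (-c) = a * t ^ ((m : ℂ) - c) := by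
      intro t ht
      rw [eval_monomial, sub_eq_add_neg, cpow_add _ _ (slitPlane_ne_zero ht), cpow_natCast,
        mul_assoc]
    by_cases h : (m : ℂ) - c + 1 = 0
    · refine ⟨fun t => a * log t, fun t ht => ?_⟩
      rw [eval_eq t ht, show (m : ℂ) - c = -1 by linear_combination h, cpow_neg_one]
      exact (hasDerivAt_log ht).const_mul a
    · refine ⟨fun t => a / ((m : ℂ) - c + 1) * t ^ ((m : ℂ) - c + 1), fun t ht => ?_⟩
      rw [eval_eq t ht]
      refine ((hasStrictDerivAt_cpow_const ht).hasDerivAt.const_mul _).congr_deriv ?_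
      rw [add_sub_cancel_right]
      field_simp

theorem seg_mem_slitPlane {w : ℂ} (hw : w ∈ slitPlane) {s : ℝ} (hs : s ∈ Icc (0 : ℝ) 1) :
    seg w s ∈ slitPlane := by
  simpa [seg, real_smul] using
    starConvex_one_slitPlane.add_smul_mem (y := w - 1) (by simpa using hw) hs.1 hs.2

theorem exp_ofReal_mul_I_mem_slitPlane {θ : ℝ} (hθ : θ ∈ Ioo (-π) π) :
    exp (θ * I) ∈ slitPlane := by
  rw [exp_mem_slitPlane]
  simp only [mul_im, ofReal_re, I_im, mul_one, ofReal_im, I_re, mul_zero, add_zero]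
  rw [(toIocMod_eq_self _).2 ⟨hθ.1, by linarith [hθ.2]⟩]
  exact hθ.2.ne

theorem hasDerivAt_seg (w : ℂ) (s : ℝ) : HasDerivAt (seg w) (w - 1) s :=
  ((hasDerivAt_mul_const (w - 1)).const_add 1).comp_ofReal (z := s)

theorem integral_comp_mul_deriv_eq_sub {U : Set ℂ} {F f : ℂ → ℂ} {γ γ' : ℝ → ℂ}
    {a b : ℝ} (hF : ∀ z ∈ U, HasDerivAt F (f z) z) (hf : ContinuousOn f U)
    (hγ : ∀ s ∈ uIcc a b, HasDerivAt γ (γ' s) s) (hγ' : ContinuousOn γ' (uIcc a b))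
    (hγU : MapsTo γ (uIcc a b) U) :
    ∫ s in a..b, f (γ s) * γ' s = F (γ b) - F (γ a) := by
  refine intervalIntegral.integral_eq_sub_of_hasDerivAt
    (fun s hs => (hF _ (hγU hs)).comp s (hγ s hs)) ?_
  refine ContinuousOn.intervalIntegrable (ContinuousOn.mul ?_ hγ')
  exact hf.comp (fun s hs => (hγ s hs).continuousAt.continuousWithinAt) hγU

theorem mul_integral_seg_eq_integral_arc {f : ℂ → ℂ}
    (hF : ∃ F : ℂ → ℂ, ∀ z ∈ slitPlane, HasDerivAt F (f z) z)
    (hf : ContinuousOn f slitPlane) {φ : ℝ} (hφ : φ ∈ Ioo (-π) π) :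
    (exp (φ * I) - 1) * ∫ s in (0 : ℝ)..1, f (seg (exp (φ * I)) s) =
      ∫ θ in (0 : ℝ)..φ, f (exp (θ * I)) * (exp (θ * I) * I) := by
  obtain ⟨F, hF⟩ := hF
  have hseg := integral_comp_mul_deriv_eq_sub (a := 0) (b := 1)
    (γ' := fun _ => exp (φ * I) - 1) hF hf (fun s _ => hasDerivAt_seg _ s) continuousOn_const
    fun s hs => seg_mem_slitPlane (exp_ofReal_mul_I_mem_slitPlane hφ)
      (by simpa [uIcc_of_le] using hs)
  have harc := integral_comp_mul_deriv_eq_sub (a := 0) (b := φ)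
    (γ := fun θ : ℝ => exp (θ * I)) (γ' := fun θ => exp (θ * I) * I) hF hf
    (fun θ _ => by simpa using (((hasDerivAt_id (θ : ℂ)).mul_const I).cexp).comp_ofReal)
    (by fun_prop) fun θ hθ => exp_ofReal_mul_I_mem_slitPlane <|
      ordConnected_Ioo.uIcc_subset ⟨by linarith [Real.pi_pos], Real.pi_pos⟩ hφ hθ
  rw [harc, mul_comm, ← intervalIntegral.integral_mul_const, hseg]
  simp [seg]

theorem two_mul_sin_mul_sin_le (x y : ℝ) :
    2 * Real.sin x * Real.sin y ≤ 2 * Real.sin ((x + y) / 2) ^ 2 := by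
  have h := Real.sin_sq_eq_half_sub ((x + y) / 2)
  rw [show 2 * ((x + y) / 2) = x + y by ring] at h
  nlinarith [Real.cos_sub x y, Real.cos_add x y, Real.cos_le_one (x - y)]

theorem norm_one_sub_exp_ofReal_mul_I (α : ℝ) :
    ‖1 - exp (α * I)‖ = |2 * Real.sin (α / 2)| := by
  rw [norm_sub_rev, mul_comm, norm_exp_I_mul_ofReal_sub_one, Real.norm_eq_abs]

theorem norm_one_sub_exp_mul_norm_exp_sub_exp_le {θ φ : ℝ} (hθ : 0 ≤ θ) (hθφ : θ ≤ φ)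
    (hφ : φ ≤ 2 * π) :
    ‖1 - exp (θ * I)‖ * ‖exp (θ * I) - exp (φ * I)‖ ≤ ‖1 - exp ((φ / 2 : ℝ) * I)‖ ^ 2 := by
  have hfactor : exp (θ * I) - exp (φ * I) = exp (θ * I) * (1 - exp ((φ - θ : ℝ) * I)) := by
    rw [mul_sub, mul_one, ← exp_add]
    push_cast
    ring_nf
  rw [hfactor, norm_mul, norm_exp_ofReal_mul_I, one_mul, norm_one_sub_exp_ofReal_mul_I,
    norm_one_sub_exp_ofReal_mul_I, norm_one_sub_exp_ofReal_mul_I, sq_abs,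
    abs_of_nonneg, abs_of_nonneg]
  · have := two_mul_sin_mul_sin_le (θ / 2) ((φ - θ) / 2)
    rw [show (θ / 2 + (φ - θ) / 2) / 2 = φ / 2 / 2 by ring] at this
    nlinarith
  all_goals
    refine mul_nonneg two_pos.le (Real.sin_nonneg_of_nonneg_of_le_pi ?_ ?_) <;> linarith

theorem norm_integrand_on_arc_le (r : ℕ) (c : ℝ) {θ φ : ℝ} (hθ : 0 ≤ θ) (hθφ : θ ≤ φ)
    (hφ : φ ≤ 2 * π) :
    ‖(1 - exp (θ * I)) ^ r * (exp (θ * I) - exp (φ * I)) ^ r * exp (θ * I) ^ (c : ℂ) *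
        (exp (θ * I) * I)‖ ≤ ‖1 - exp ((φ / 2 : ℝ) * I)‖ ^ (2 * r) := by
  rw [norm_mul, norm_mul, norm_mul, norm_mul, norm_cpow_real, norm_exp_ofReal_mul_I,
    Real.one_rpow, norm_I, norm_pow, norm_pow, ← mul_pow, pow_mul]
  simpa using pow_le_pow_left₀ (by positivity)
    (norm_one_sub_exp_mul_norm_exp_sub_exp_le hθ hθφ hφ) r

theorem remainder_integral_bound_general (n r : ℕ)
    (φ : ℝ) (hφ0 : 0 < φ) (hφπ : φ < Real.pi) :
    ‖Rnr n r (Complex.exp ((φ : ℂ) * Complex.I))‖ ≤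
      Real.Gamma ((r : ℝ) + 1 + 1 / (n : ℝ)) /
          ((Nat.factorial r : ℝ) * Real.Gamma (1 / (n : ℝ))) * φ *
        ‖1 - Complex.exp (((φ / 2 : ℝ) : ℂ) * Complex.I)‖ ^ (2 * r) := by
  set w := exp (φ * I)
  set C := Real.Gamma ((r : ℝ) + 1 + 1 / (n : ℝ)) /
    ((Nat.factorial r : ℝ) * Real.Gamma (1 / (n : ℝ)))
  set c : ℝ := -((r : ℝ) + 1 - 1 / (n : ℝ))
  set f : ℂ → ℂ := fun t => (1 - t) ^ r * (t - w) ^ r * t ^ (c : ℂ)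
  have hC : 0 ≤ C := div_nonneg (Real.Gamma_nonneg_of_nonneg (by positivity))
    (mul_nonneg (by positivity) (Real.Gamma_nonneg_of_nonneg (by positivity)))
  have hRnr : Rnr n r w = C * ((w - 1) * ∫ s in (0 : ℝ)..1, f (seg w s)) := by
    simp [Rnr, f, c, C]
  have hprim : ∃ F : ℂ → ℂ, ∀ z ∈ slitPlane, HasDerivAt F (f z) z := by
    obtain ⟨F, hF⟩ :=
      exists_primitive_eval_mul_cpow (-c) ((1 - X) ^ r * (X - Polynomial.C w) ^ r)
    exact ⟨F, fun z hz => by simpa using hF z hz⟩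
  have hcont : ContinuousOn f slitPlane := fun t ht =>
    (by fun_prop : Continuous fun t : ℂ => (1 - t) ^ r * (t - w) ^ r).continuousAt.mul
      (continuousAt_cpow_const ht) |>.continuousWithinAt
  rw [hRnr, mul_integral_seg_eq_integral_arc hprim hcont ⟨by linarith, hφπ⟩, norm_mul,
    norm_real, Real.norm_of_nonneg hC, mul_assoc]
  refine mul_le_mul_of_nonneg_left ?_ hC
  calc _ ≤ ‖1 - exp ((φ / 2 : ℝ) * I)‖ ^ (2 * r) * |φ - 0| :=
        intervalIntegral.norm_integral_le_of_norm_le_const fun θ hθ => by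
          rw [uIoc_of_le hφ0.le] at hθ
          exact norm_integrand_on_arc_le r c hθ.1.le hθ.2 (by linarith [Real.pi_pos])
    _ = _ := by rw [sub_zero, abs_of_pos hφ0, mul_comm]

theorem remainder_integral_bound (n r : ℕ) (hn : 0 < n) (hr : 0 < r)
    (φ : ℝ) (hφ0 : 0 < φ) (hφπ : φ < Real.pi) :
    ‖Rnr n r (Complex.exp ((φ : ℂ) * Complex.I))‖ ≤
      Real.Gamma ((r : ℝ) + 1 + 1 / (n : ℝ)) /
          ((Nat.factorial r : ℝ) * Real.Gamma (1 / (n : ℝ))) * φ *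
        ‖1 - Complex.exp (((φ / 2 : ℝ) : ℂ) * Complex.I)‖ ^ (2 * r) :=
  remainder_integral_bound_general n r φ hφ0 hφπ
end

section
/- Let n ≥ 2 and r ≥ 1 be integers, and let u and z be nonzero complex numbers with w = z/u = e^{iφ} where 0 < φ < π; put √w = e^{iφ/2}. Then |X*_{n,r}(z,u)| ≤ 4·|u|^r·(Γ(1-1/n)·r!/Γ(r+1-1/n))·|1+√w|^{2r-2} and |X*_{n,r}(u,z)| ≤ 4·|z|^r·(Γ(1-1/n)·r!/Γ(r+1-1/n))·|1+√w|^{2r-2}. -/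
/-- The homogenized polynomial `X*_{n,r}(z,u) = u^r · X_{n,r}(z/u)`, where
`X_{n,r}(X) = ₂F₁(-r, -r-1/n, 1-1/n; X)` is characterized by
`C(r-1/n, r)·X_{n,r}(X) = ∑_{k=0}^r C(r-1/n, r-k)·C(r+1/n, k)·X^k`. -/
noncomputable def Xstar (n r : ℕ) (z u : ℂ) : ℂ :=
  u ^ r * (∑ k ∈ Finset.range (r + 1),
      ((genChoose ((r : ℝ) - 1 / (n : ℝ)) (r - k) *
        genChoose ((r : ℝ) + 1 / (n : ℝ)) k : ℝ) : ℂ) * (z / u) ^ k) /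
    ((genChoose ((r : ℝ) - 1 / (n : ℝ)) r : ℝ) : ℂ)

/-!
With `w = z / u`, the sum in `Xstar n r z u` is the coefficient of `t ^ r` in
`(1 + w t) ^ (r + 1/n) * (1 + t) ^ (r - 1/n)`, whose binomial series converge for `|t| < 1`.
Cauchy's estimate on the circle `|t| = ρ < 1` bounds it by `ρ⁻ʳ` times the maximum there.
On that circle `a = |1 + t|` and `b = |1 + w t|` are at most `2`, so
`a ^ (r - 1/n) * b ^ (r + 1/n) ≤ 4 (a b) ^ (r - 1)`, and
`a b = |1 + (1 + w) t + w t²| ≤ 1 + |1 + w| ρ + ρ²`. Letting `ρ → 1` gives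
`4 (2 + |1 + w|) ^ (r - 1)`, which is `4 |1 + √w| ^ (2r - 2)` because `|1 + w| = 2 cos (φ/2)`.
The normalising constant `C(r - 1/n, r)` equals `Γ(r + 1 - 1/n) / (Γ(1 - 1/n) r!)`, and the second
inequality is the first one for `u / z = w⁻¹`, as `|1 + w⁻¹| = |1 + w|`.
-/

open Complex Finset Filter Topology Metric

theorem hasFPowerSeriesOnBall_ofScalars_of_hasSum {c : ℕ → ℂ} {f : ℂ → ℂ} {R : ℝ}
    (hR : 0 < R) (hf : ∀ z ∈ ball (0 : ℂ) R, HasSum (fun n => c n * z ^ n) (f z)) :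
    HasFPowerSeriesOnBall f (FormalMultilinearSeries.ofScalars ℂ c) 0 (ENNReal.ofReal R) where
  r_le := by
    refine ENNReal.le_of_forall_nnreal_lt fun ρ hρ => ?_
    have hρR : (ρ : ℂ) ∈ ball 0 R := by simpa using ENNReal.coe_lt_ofReal.1 hρ
    refine FormalMultilinearSeries.le_radius_of_tendsto _ (l := 0) ?_
    simpa [FormalMultilinearSeries.ofScalars_norm] using
      (hf ρ hρR).summable.tendsto_atTop_zero.norm
  r_pos := by simpa using hR
  hasSum {z} hz := by
    rw [eball_ofReal] at hz
    simpa [FormalMultilinearSeries.ofScalars_apply_eq, mul_comm] using hf z hz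

theorem norm_coeff_mul_pow_le_of_hasSum {c : ℕ → ℂ} {f : ℂ → ℂ} {R ρ B : ℝ} (hρ : 0 < ρ)
    (hρR : ρ < R) (hf : ∀ z ∈ ball (0 : ℂ) R, HasSum (fun n => c n * z ^ n) (f z))
    (hB : ∀ z ∈ sphere (0 : ℂ) ρ, ‖f z‖ ≤ B) (n : ℕ) : ‖c n‖ * ρ ^ n ≤ B := by
  have hp := hasFPowerSeriesOnBall_ofScalars_of_hasSum (hρ.trans hρR) hf
  have hd : DiffContOnCl ℂ f (ball 0 ρ) := by
    refine (hp.differentiableOn.mono ?_).diffContOnCl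
    rw [closure_ball _ hρ.ne', eball_ofReal]
    exact closedBall_subset_ball hρR
  -- `n! • c n` is the `n`-th derivative of `f` at `0`: apply Cauchy's estimate for derivatives.
  have hC := norm_iteratedDeriv_le_of_forall_mem_sphere_norm_le n hρ hd hB
  rw [iteratedDeriv_eq_iteratedFDeriv, ← hp.factorial_smul 1 n] at hC
  simp only [nsmul_eq_mul, FormalMultilinearSeries.ofScalars_apply_eq, one_pow, smul_eq_mul,
    mul_one, norm_mul, norm_natCast] at hC
  rwa [mul_div_assoc, mul_le_mul_iff_right₀ (by positivity), le_div_iff₀ (by positivity)] at hC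

lemma genChoose_eq_choose (β : ℝ) (k : ℕ) : genChoose β k = Ring.choose β k := by
  rw [Ring.choose_eq_smul, ← Polynomial.aeval_eq_smeval, ← Polynomial.eval_map_algebraMap,
    descPochhammer_map, descPochhammer_eval_eq_prod_range, genChoose, smul_eq_mul, div_eq_inv_mul]

lemma enorm_lt_one_of_norm_lt_one {t : ℂ} (ht : ‖t‖ < 1) : ‖t‖ₑ < 1 := by
  rwa [← ofReal_norm, ENNReal.ofReal_lt_one]

lemma hasSum_genChoose_mul_pow (β : ℝ) {t : ℂ} (ht : ‖t‖ < 1) :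
    HasSum (fun k => (genChoose β k : ℂ) * t ^ k) ((1 + t) ^ (β : ℂ)) := by
  simpa [genChoose_eq_choose, mul_comm, FormalMultilinearSeries.coeff_ofScalars, binomialSeries,
    ← ofReal_choose] using (one_add_cpow_hasFPowerSeriesOnBall_zero (a := (β : ℂ))).hasSum
      (y := t) (by simpa using enorm_lt_one_of_norm_lt_one ht)

lemma summable_norm_genChoose_mul_pow (β : ℝ) {t : ℂ} (ht : ‖t‖ < 1) :
    Summable (fun k => ‖(genChoose β k : ℂ) * t ^ k‖) := by
  simpa [genChoose_eq_choose, mul_comm, FormalMultilinearSeries.coeff_ofScalars, binomialSeries,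
    ← ofReal_choose] using (binomialSeries ℂ (β : ℂ)).summable_norm_apply (x := t)
      (lt_of_lt_of_le (by simpa using enorm_lt_one_of_norm_lt_one ht)
        binomialSeries_radius_ge_one)

/-- The coefficient of `t ^ j` in `(1 + w t) ^ α * (1 + t) ^ β`. -/
noncomputable def mixedBinomialCoeff (α β : ℝ) (w : ℂ) (j : ℕ) : ℂ :=
  ∑ k ∈ range (j + 1), ((genChoose β (j - k) * genChoose α k : ℝ) : ℂ) * w ^ k

lemma hasSum_mixedBinomialCoeff_mul_pow (α β : ℝ) {w t : ℂ} (hw : ‖w‖ ≤ 1) (ht : ‖t‖ < 1) :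
    HasSum (fun j => mixedBinomialCoeff α β w j * t ^ j)
      ((1 + w * t) ^ (α : ℂ) * (1 + t) ^ (β : ℂ)) := by
  have hwt : ‖w * t‖ < 1 := by
    rw [norm_mul]; nlinarith [norm_nonneg w, norm_nonneg t]
  have h := hasSum_sum_range_mul_of_summable_norm (summable_norm_genChoose_mul_pow α hwt)
    (summable_norm_genChoose_mul_pow β ht)
  rw [(hasSum_genChoose_mul_pow α hwt).tsum_eq, (hasSum_genChoose_mul_pow β ht).tsum_eq] at h
  refine h.congr_fun fun j => ?_
  rw [mixedBinomialCoeff, sum_mul]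
  refine sum_congr rfl fun k hk => ?_
  rw [← pow_mul_pow_sub t (Nat.le_of_lt_succ (mem_range.1 hk))]
  push_cast
  ring

lemma norm_one_add_pos_and_le_two {t : ℂ} (ht : ‖t‖ < 1) : 0 < ‖1 + t‖ ∧ ‖1 + t‖ ≤ 2 := by
  have h1 := norm_sub_norm_le (1 : ℂ) (-t)
  have h2 := norm_add_le (1 : ℂ) t
  simp only [norm_one, norm_neg, sub_neg_eq_add] at h1 h2
  constructor <;> linarith

lemma norm_one_add_mul_mul_one_add_le {w : ℂ} (hw : ‖w‖ = 1) (t : ℂ) :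
    ‖(1 + w * t) * (1 + t)‖ ≤ 1 + ‖1 + w‖ * ‖t‖ + ‖t‖ ^ 2 := by
  calc ‖(1 + w * t) * (1 + t)‖ = ‖1 + (1 + w) * t + w * t ^ 2‖ := by ring_nf
    _ ≤ ‖(1 : ℂ)‖ + ‖(1 + w) * t‖ + ‖w * t ^ 2‖ := norm_add₃_le
    _ = 1 + ‖1 + w‖ * ‖t‖ + ‖t‖ ^ 2 := by simp [hw]

lemma rpow_sub_mul_rpow_add_le {a b x : ℝ} (ha0 : 0 < a) (ha2 : a ≤ 2) (hb0 : 0 < b) (hb2 : b ≤ 2)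
    (hx0 : 0 ≤ x) (hx1 : x ≤ 1) {r : ℕ} (hr : 1 ≤ r) :
    a ^ ((r : ℝ) - x) * b ^ ((r : ℝ) + x) ≤ 4 * (a * b) ^ (r - 1) := by
  have hr' : ((r - 1 : ℕ) : ℝ) = r - 1 := by rw [Nat.cast_sub hr, Nat.cast_one]
  have hsplit : a ^ ((r : ℝ) - x) * b ^ ((r : ℝ) + x)
      = (a * b) ^ (r - 1) * (a ^ (1 - x) * b ^ (1 + x)) := by
    rw [show (r : ℝ) - x = ((r - 1 : ℕ) : ℝ) + (1 - x) by rw [hr']; ring,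
      show (r : ℝ) + x = ((r - 1 : ℕ) : ℝ) + (1 + x) by rw [hr']; ring,
      Real.rpow_add ha0, Real.rpow_add hb0, Real.rpow_natCast, Real.rpow_natCast, mul_pow]
    ring
  have hfour : a ^ (1 - x) * b ^ (1 + x) ≤ 4 :=
    calc a ^ (1 - x) * b ^ (1 + x) ≤ (2 : ℝ) ^ (1 - x) * (2 : ℝ) ^ (1 + x) := by
          gcongr
      _ = 4 := by rw [← Real.rpow_add two_pos]; norm_num
  rw [hsplit, mul_comm 4]
  gcongr

lemma norm_one_add_cpow_mul_cpow_le {w t : ℂ} (hw : ‖w‖ = 1) (ht : ‖t‖ < 1) {x : ℝ} (hx0 : 0 ≤ x)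
    (hx1 : x ≤ 1) {r : ℕ} (hr : 1 ≤ r) :
    ‖(1 + w * t) ^ (((r : ℝ) + x : ℝ) : ℂ) * (1 + t) ^ (((r : ℝ) - x : ℝ) : ℂ)‖
      ≤ 4 * (1 + ‖1 + w‖ * ‖t‖ + ‖t‖ ^ 2) ^ (r - 1) := by
  have hwt : ‖w * t‖ < 1 := by rwa [norm_mul, hw, one_mul]
  obtain ⟨ha0, ha2⟩ := norm_one_add_pos_and_le_two ht
  obtain ⟨hb0, hb2⟩ := norm_one_add_pos_and_le_two hwt
  rw [norm_mul, norm_cpow_real, norm_cpow_real, mul_comm]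
  calc ‖1 + t‖ ^ ((r : ℝ) - x) * ‖1 + w * t‖ ^ ((r : ℝ) + x)
      ≤ 4 * (‖1 + t‖ * ‖1 + w * t‖) ^ (r - 1) :=
        rpow_sub_mul_rpow_add_le ha0 ha2 hb0 hb2 hx0 hx1 hr
    _ ≤ 4 * (1 + ‖1 + w‖ * ‖t‖ + ‖t‖ ^ 2) ^ (r - 1) := by
        gcongr
        rw [← norm_mul, mul_comm]
        exact norm_one_add_mul_mul_one_add_le hw t

lemma norm_mixedBinomialCoeff_le {w : ℂ} (hw : ‖w‖ = 1) {x : ℝ} (hx0 : 0 ≤ x) (hx1 : x ≤ 1)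
    {r : ℕ} (hr : 1 ≤ r) :
    ‖mixedBinomialCoeff (r + x) (r - x) w r‖ ≤ 4 * (2 + ‖1 + w‖) ^ (r - 1) := by
  have hcauchy : ∀ ρ ∈ Set.Ioo (0 : ℝ) 1, ‖mixedBinomialCoeff (r + x) (r - x) w r‖ * ρ ^ r
      ≤ 4 * (1 + ‖1 + w‖ * ρ + ρ ^ 2) ^ (r - 1) := fun ρ ⟨hρ0, hρ1⟩ =>
    norm_coeff_mul_pow_le_of_hasSum hρ0 hρ1
      (fun t ht => hasSum_mixedBinomialCoeff_mul_pow _ _ hw.le (mem_ball_zero_iff.1 ht))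
      (fun t ht => by
        have ht' := mem_sphere_zero_iff_norm.1 ht
        rw [← ht']
        exact norm_one_add_cpow_mul_cpow_le hw (by rwa [ht']) hx0 hx1 hr) r
  refine le_of_tendsto_of_tendsto (b := 𝓝[<] (1 : ℝ)) ?_ ?_
    (eventually_of_mem (Ioo_mem_nhdsLT zero_lt_one) hcauchy)
  · exact ((continuous_const.mul (continuous_pow r)).tendsto' 1 _ (by simp)).mono_left
      nhdsWithin_le_nhds
  · exact ((by fun_prop : Continuous fun ρ : ℝ => 4 * (1 + ‖1 + w‖ * ρ + ρ ^ 2) ^ (r - 1)).tendsto'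
      1 _ (by ring_nf)).mono_left nhdsWithin_le_nhds

lemma prod_range_sub_eq_Gamma_div {x : ℝ} (hx : x < 1) (r : ℕ) :
    ∏ i ∈ range r, ((r : ℝ) - x - i) = Real.Gamma (r + 1 - x) / Real.Gamma (1 - x) := by
  induction r with
  | zero => simp [div_self (Real.Gamma_pos_of_pos (sub_pos.2 hx)).ne']
  | succ r ih =>
    have hpos : 0 < (r : ℝ) + 1 - x := by linarith [(r.cast_nonneg : (0 : ℝ) ≤ r)]
    rw [prod_range_succ', show ((r + 1 : ℕ) : ℝ) + 1 - x = ((r : ℝ) + 1 - x) + 1 by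
      push_cast; ring, Real.Gamma_add_one hpos.ne', mul_div_assoc, ← ih, mul_comm]
    push_cast
    congr 1
    · ring
    · exact prod_congr rfl fun i _ => by ring

lemma genChoose_sub_self_eq_Gamma {x : ℝ} (hx : x < 1) (r : ℕ) :
    genChoose (r - x) r = Real.Gamma (r + 1 - x) / (Real.Gamma (1 - x) * r.factorial) := by
  rw [genChoose, prod_range_sub_eq_Gamma_div hx, div_div]

lemma norm_Xstar_le {n r : ℕ} (hn : 2 ≤ n) (hr : 1 ≤ r) {z u : ℂ} (hzu : ‖z / u‖ = 1) :
    ‖Xstar n r z u‖ ≤ 4 * ‖u‖ ^ r *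
      (Real.Gamma (1 - 1 / (n : ℝ)) * (Nat.factorial r : ℝ) /
        Real.Gamma ((r : ℝ) + 1 - 1 / (n : ℝ))) * (2 + ‖1 + z / u‖) ^ (r - 1) := by
  have hx0 : 0 ≤ 1 / (n : ℝ) := by positivity
  have hx1 : 1 / (n : ℝ) ≤ 1 / 2 := one_div_le_one_div_of_le two_pos (by exact_mod_cast hn)
  have hC := genChoose_sub_self_eq_Gamma (x := 1 / (n : ℝ)) (by linarith) r
  have hΓ1 := Real.Gamma_pos_of_pos (s := 1 - 1 / (n : ℝ)) (by linarith)
  have hΓ2 := Real.Gamma_pos_of_pos (s := (r : ℝ) + 1 - 1 / (n : ℝ))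
    (by linarith [(r.cast_nonneg : (0 : ℝ) ≤ r)])
  have hX : Xstar n r z u = u ^ r * mixedBinomialCoeff (r + 1 / n) (r - 1 / n) (z / u) r /
      ((genChoose ((r : ℝ) - 1 / (n : ℝ)) r : ℝ) : ℂ) := rfl
  rw [hX, norm_div, norm_mul, norm_pow, norm_real, hC, Real.norm_of_nonneg (by positivity),
    div_div_eq_mul_div]
  grw [norm_mixedBinomialCoeff_le hzu hx0 (by linarith) hr]
  exact (by ring : _ = _).le

lemma two_add_norm_one_add_sq {s : ℂ} (hs : ‖s‖ = 1) (hs_re : 0 ≤ s.re) :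
    2 + ‖1 + s ^ 2‖ = ‖1 + s‖ ^ 2 := by
  have hsq : s.re * s.re + s.im * s.im = 1 := by
    rw [← normSq_apply, ← Complex.sq_norm, hs, one_pow]
  have h : 1 + s ^ 2 = ((2 * s.re : ℝ) : ℂ) * s := by
    apply Complex.ext <;> simp [sq] <;> nlinarith
  rw [h, norm_mul, hs, norm_real, Real.norm_of_nonneg (by positivity), Complex.sq_norm,
    normSq_apply]
  simp only [add_re, one_re, add_im, one_im, zero_add]
  nlinarith

lemma norm_one_add_inv {a : ℂ} (ha : ‖a‖ = 1) : ‖1 + a⁻¹‖ = ‖1 + a‖ := by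
  have ha0 : a ≠ 0 := norm_ne_zero_iff.1 (by rw [ha]; exact one_ne_zero)
  rw [show 1 + a⁻¹ = (1 + a) * a⁻¹ by field_simp; ring, norm_mul, norm_inv, ha, inv_one, mul_one]

theorem Xstar_bounds_general (n r : ℕ) (hn : 2 ≤ n) (hr : 1 ≤ r)
    (u z : ℂ)
    (φ : ℝ) (hφ0 : 0 < φ) (hφπ : φ < Real.pi)
    (hw : z / u = Complex.exp ((φ : ℂ) * Complex.I)) :
    ‖Xstar n r z u‖ ≤ 4 * ‖u‖ ^ r *
        (Real.Gamma (1 - 1 / (n : ℝ)) * (Nat.factorial r : ℝ) /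
          Real.Gamma ((r : ℝ) + 1 - 1 / (n : ℝ))) *
        ‖1 + Complex.exp (((φ / 2 : ℝ) : ℂ) * Complex.I)‖ ^ (2 * r - 2) ∧
    ‖Xstar n r u z‖ ≤ 4 * ‖z‖ ^ r *
        (Real.Gamma (1 - 1 / (n : ℝ)) * (Nat.factorial r : ℝ) /
          Real.Gamma ((r : ℝ) + 1 - 1 / (n : ℝ))) *
        ‖1 + Complex.exp (((φ / 2 : ℝ) : ℂ) * Complex.I)‖ ^ (2 * r - 2) := by
  set s := exp (((φ / 2 : ℝ) : ℂ) * I)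
  have hws : z / u = s ^ 2 := by rw [hw, ← exp_nat_mul]; push_cast; ring_nf
  have hs : ‖s‖ = 1 := norm_exp_ofReal_mul_I _
  have hs_re : 0 ≤ s.re := by
    rw [exp_ofReal_mul_I_re]
    exact Real.cos_nonneg_of_mem_Icc ⟨by linarith, by linarith⟩
  have hzu : ‖z / u‖ = 1 := by rw [hws, norm_pow, hs, one_pow]
  have hbound : (2 + ‖1 + z / u‖) ^ (r - 1) = ‖1 + s‖ ^ (2 * r - 2) := by
    rw [hws, two_add_norm_one_add_sq hs hs_re, ← pow_mul, Nat.mul_sub_one]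
  have huz : u / z = (z / u)⁻¹ := (inv_div z u).symm
  refine ⟨hbound ▸ norm_Xstar_le hn hr hzu, ?_⟩
  have h := norm_Xstar_le (z := u) (u := z) hn hr (by rw [huz, norm_inv, hzu, inv_one])
  rwa [huz, norm_one_add_inv hzu, hbound] at h

theorem Xstar_bounds (n r : ℕ) (hn : 2 ≤ n) (hr : 1 ≤ r)
    (u z : ℂ) (hu : u ≠ 0) (hz : z ≠ 0)
    (φ : ℝ) (hφ0 : 0 < φ) (hφπ : φ < Real.pi)
    (hw : z / u = Complex.exp ((φ : ℂ) * Complex.I)) :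
    ‖Xstar n r z u‖ ≤ 4 * ‖u‖ ^ r *
        (Real.Gamma (1 - 1 / (n : ℝ)) * (Nat.factorial r : ℝ) /
          Real.Gamma ((r : ℝ) + 1 - 1 / (n : ℝ))) *
        ‖1 + Complex.exp (((φ / 2 : ℝ) : ℂ) * Complex.I)‖ ^ (2 * r - 2) ∧
    ‖Xstar n r u z‖ ≤ 4 * ‖z‖ ^ r *
        (Real.Gamma (1 - 1 / (n : ℝ)) * (Nat.factorial r : ℝ) /
          Real.Gamma ((r : ℝ) + 1 - 1 / (n : ℝ))) *
        ‖1 + Complex.exp (((φ / 2 : ℝ) : ℂ) * Complex.I)‖ ^ (2 * r - 2) :=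
  Xstar_bounds_general n r hn hr u z φ hφ0 hφπ hw
end

section
/- Let P(X) be a real polynomial of degree n ≥ 2 and U(X) a real quadratic polynomial with nonzero discriminant such that U·P'' - (n-1)·U'·P' + (n(n-1)/2)·U''·P = 0 identically. Set Y₁ = 2UP' - nU'P, h = ((n²-1)/4)·(U'² - 2UU'') (a nonzero constant), λ = h/(n²-1). Fix a real number x with U(x)·P(x) ≠ 0, and define sequences (A_r) and (B_r) of real numbers by A₀ = 2h/3, A₁ = (2(n+1)/3)·(U(x)P'(x) - ((n-1)/2)U'(x)P(x)), B₀ = 2hx/3, B₁ = x·A₁ - 2(n+1)U(x)P(x)/3, and for r ≥ 1 by λ(n(r+1)-1)·A_{r+1} = (r+1/2)·Y₁(x)·A_r - (nr+1)·P(x)²·A_{r-1}, and the same recurrence for B_r. Let a, b, c, d be complex numbers with ad - bc ≠ 0 and put K_r = a·A_r + b·B_r and L_r = c·A_r + d·B_r. Then K_{r+1}·L_r ≠ K_r·L_{r+1} for all r ≥ 0. -/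
/-!
The Casoratian `W r = A (r+1) * B r - A r * B (r+1)` of two solutions of the three-term
recurrence satisfies `λ (n (r+2) - 1) W (r+1) = (n (r+1) + 1) P(x)² W r`, and
`W 0 = 4 (n+1) h / 9 · U(x) P(x) ≠ 0`; since `P(x) ≠ 0`, no `W r` vanishes.
Finally `K (r+1) L r - K r L (r+1) = (ad - bc) W r`.
-/

open Polynomial

section Casoratian

variable {R : Type*} [CommRing R]

def casoratian (u v : ℕ → R) (r : ℕ) : R :=
  u (r + 1) * v r - u r * v (r + 1)

theorem casoratian_linear_combination (u v : ℕ → R) (a b c d : R) (r : ℕ) :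
    casoratian (fun s => a * u s + b * v s) (fun s => c * u s + d * v s) r =
      (a * d - b * c) * casoratian u v r := by
  simp only [casoratian]
  ring

theorem casoratian_comp_ringHom {S : Type*} [CommRing S] (f : R →+* S) (u v : ℕ → R) (r : ℕ) :
    casoratian (f ∘ u) (f ∘ v) r = f (casoratian u v r) := by
  simp only [casoratian, Function.comp_apply, map_sub, map_mul]

theorem casoratian_succ_of_recurrence {α β γ u v : ℕ → R} (r : ℕ)
    (hu : α (r + 1) * u (r + 2) = β (r + 1) * u (r + 1) - γ (r + 1) * u r)
    (hv : α (r + 1) * v (r + 2) = β (r + 1) * v (r + 1) - γ (r + 1) * v r) :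
    α (r + 1) * casoratian u v (r + 1) = γ (r + 1) * casoratian u v r := by
  simp only [casoratian]
  linear_combination v (r + 1) * hu - u (r + 1) * hv

theorem casoratian_ne_zero_of_recurrence [NoZeroDivisors R] {α β γ u v : ℕ → R}
    (hu : ∀ r, α (r + 1) * u (r + 2) = β (r + 1) * u (r + 1) - γ (r + 1) * u r)
    (hv : ∀ r, α (r + 1) * v (r + 2) = β (r + 1) * v (r + 1) - γ (r + 1) * v r)
    (hγ : ∀ r, γ (r + 1) ≠ 0) (h₀ : casoratian u v 0 ≠ 0) (r : ℕ) :
    casoratian u v r ≠ 0 := by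
  induction r with
  | zero => exact h₀
  | succ r ih =>
    intro hW
    have key := casoratian_succ_of_recurrence r (hu r) (hv r)
    rw [hW, mul_zero] at key
    exact mul_ne_zero (hγ r) ih key.symm

end Casoratian

theorem thue_nonvanishing_determinant_general (n : ℕ) (hn : 2 ≤ n)
    (P U : Polynomial ℝ)
    (hdisc : (U.coeff 1)^2 - 4 * U.coeff 2 * U.coeff 0 ≠ 0)
    (x : ℝ) (hx : U.eval x * P.eval x ≠ 0)
    (h lam Y₁ : ℝ)
    (hh : h = ((n : ℝ)^2 - 1) / 4 * ((U.coeff 1)^2 - 4 * U.coeff 2 * U.coeff 0))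
    (A B : ℕ → ℝ)
    (hA0 : A 0 = 2 * h / 3)
    (hB0 : B 0 = 2 * h * x / 3)
    (hB1 : B 1 = x * A 1 - 2 * ((n : ℝ) + 1) * U.eval x * P.eval x / 3)
    (hArec : ∀ r : ℕ, 1 ≤ r →
      lam * ((n : ℝ) * ((r : ℝ) + 1) - 1) * A (r + 1) =
        ((r : ℝ) + 1 / 2) * Y₁ * A r - ((n : ℝ) * (r : ℝ) + 1) * (P.eval x)^2 * A (r - 1))
    (hBrec : ∀ r : ℕ, 1 ≤ r →
      lam * ((n : ℝ) * ((r : ℝ) + 1) - 1) * B (r + 1) =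
        ((r : ℝ) + 1 / 2) * Y₁ * B r - ((n : ℝ) * (r : ℝ) + 1) * (P.eval x)^2 * B (r - 1))
    (a b c d : ℂ) (habcd : a * d - b * c ≠ 0)
    (K L : ℕ → ℂ)
    (hK : ∀ r : ℕ, K r = a * (A r : ℝ) + b * (B r : ℝ))
    (hL : ∀ r : ℕ, L r = c * (A r : ℝ) + d * (B r : ℝ)) :
    ∀ r : ℕ, K (r + 1) * L r ≠ K r * L (r + 1) := by
  have hn' : (2 : ℝ) ≤ n := by exact_mod_cast hn
  have hh₀ : h ≠ 0 := by
    rw [hh]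
    exact mul_ne_zero (div_ne_zero (by nlinarith) four_ne_zero) hdisc
  have hW₀ : casoratian A B 0 = 4 * h * ((n : ℝ) + 1) / 9 * (U.eval x * P.eval x) := by
    simp only [casoratian, hA0, hB0, hB1]
    ring
  have hW : ∀ r, casoratian A B r ≠ 0 := by
    refine casoratian_ne_zero_of_recurrence (α := fun s => lam * (n * ((s : ℝ) + 1) - 1))
      (β := fun s => ((s : ℝ) + 1 / 2) * Y₁) (γ := fun s => (n * (s : ℝ) + 1) * P.eval x ^ 2)
      (fun r => ?_) (fun r => ?_) (fun r => ?_) ?_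
    · simpa using hArec (r + 1) r.succ_pos
    · simpa using hBrec (r + 1) r.succ_pos
    · exact mul_ne_zero (by positivity) (pow_ne_zero 2 (right_ne_zero_of_mul hx))
    · rw [hW₀]
      exact mul_ne_zero (by positivity) hx
  intro r
  rw [Ne, ← sub_eq_zero]
  change casoratian K L r ≠ 0
  have hKL : casoratian K L r =
      (a * d - b * c) * casoratian (Complex.ofRealHom ∘ A) (Complex.ofRealHom ∘ B) r := by
    rw [funext hK, funext hL]
    exact casoratian_linear_combination _ _ _ _ _ _ _
  rw [hKL, casoratian_comp_ringHom]
  exact mul_ne_zero habcd (Complex.ofReal_ne_zero.mpr (hW r))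

theorem thue_nonvanishing_determinant (n : ℕ) (hn : 2 ≤ n)
    (P U : Polynomial ℝ)
    (hPdeg : P.natDegree = n) (hUdeg : U.natDegree = 2)
    (hdisc : (U.coeff 1)^2 - 4 * U.coeff 2 * U.coeff 0 ≠ 0)
    (hode : U * (derivative (derivative P)) -
        C ((n : ℝ) - 1) * (derivative U * derivative P) +
        C ((n : ℝ) * ((n : ℝ) - 1) / 2) * (derivative (derivative U) * P) = 0)
    (x : ℝ) (hx : U.eval x * P.eval x ≠ 0)
    (h lam Y₁ : ℝ)
    (hh : h = ((n : ℝ)^2 - 1) / 4 * ((U.coeff 1)^2 - 4 * U.coeff 2 * U.coeff 0))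
    (hlam : lam = h / ((n : ℝ)^2 - 1))
    (hY₁ : Y₁ = 2 * U.eval x * (derivative P).eval x -
        (n : ℝ) * (derivative U).eval x * P.eval x)
    (A B : ℕ → ℝ)
    (hA0 : A 0 = 2 * h / 3)
    (hA1 : A 1 = 2 * ((n : ℝ) + 1) / 3 *
        (U.eval x * (derivative P).eval x -
          ((n : ℝ) - 1) / 2 * (derivative U).eval x * P.eval x))
    (hB0 : B 0 = 2 * h * x / 3)
    (hB1 : B 1 = x * A 1 - 2 * ((n : ℝ) + 1) * U.eval x * P.eval x / 3)
    (hArec : ∀ r : ℕ, 1 ≤ r →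
      lam * ((n : ℝ) * ((r : ℝ) + 1) - 1) * A (r + 1) =
        ((r : ℝ) + 1 / 2) * Y₁ * A r - ((n : ℝ) * (r : ℝ) + 1) * (P.eval x)^2 * A (r - 1))
    (hBrec : ∀ r : ℕ, 1 ≤ r →
      lam * ((n : ℝ) * ((r : ℝ) + 1) - 1) * B (r + 1) =
        ((r : ℝ) + 1 / 2) * Y₁ * B r - ((n : ℝ) * (r : ℝ) + 1) * (P.eval x)^2 * B (r - 1))
    (a b c d : ℂ) (habcd : a * d - b * c ≠ 0)
    (K L : ℕ → ℂ)
    (hK : ∀ r : ℕ, K r = a * (A r : ℝ) + b * (B r : ℝ))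
    (hL : ∀ r : ℕ, L r = c * (A r : ℝ) + d * (B r : ℝ)) :
    ∀ r : ℕ, K (r + 1) * L r ≠ K r * L (r + 1) :=
  thue_nonvanishing_determinant_general n hn P U hdisc x hx h lam Y₁ hh A B hA0 hB0 hB1 hArec hBrec
    a b c d habcd K L hK hL
end

section
/- Let a and b be coprime rational integers such that the roots α, β of X² - aX - b satisfy that α/β is not a root of unity, and define the integer sequence (V_m) by V₀ = 0, V₁ = 1 and V_{m+1} = a·V_m + b·V_{m-1} for m ≥ 1 (so that V_m = (α^m - β^m)/(α - β)). Then for all positive integers m and n with d = gcd(m,n), one has gcd(V_m, V_n) = |V_d|. -/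
/-!
The addition formula `V (m + n + 1) = V (m + 1) * V (n + 1) + b * V m * V n`, together with
`gcd (V (m + 1), V m) = 1` (an induction that uses `gcd (a, b) = 1`), gives
`gcd (V m, V (n + m)) = gcd (V m, V n)`. Any sequence with this property commutes with `gcd`,
since the Euclidean algorithm on the indices runs in parallel with the one on the values.
-/

theorem Int.gcd_mul_right_cancel_right_of_isCoprime {k m : ℤ} (n : ℤ) (h : IsCoprime k m) :
    Int.gcd m (n * k) = Int.gcd m n := by
  rw [Int.gcd_eq_natAbs_gcd_natAbs, Int.natAbs_mul]
  exact Nat.Coprime.gcd_mul_right_cancel_right _ (Int.isCoprime_iff_gcd_eq_one.mp h)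

theorem Nat.IsStrongDvdSequence.of_gcd_add_self {f : ℕ → ℕ}
    (h : ∀ m n, (f m).gcd (f (n + m)) = (f m).gcd (f n)) : Nat.IsStrongDvdSequence f := by
  have gcd_add_mul_self (m n k : ℕ) : (f m).gcd (f (n + k * m)) = (f m).gcd (f n) := by
    induction k with
    | zero => simp
    | succ k ih => rw [← ih, add_mul, ← add_assoc, one_mul, h]
  intro m n
  induction m, n using Nat.gcd.induction with
  | H0 n =>
    have hdvd : f n ∣ f 0 := by
      have := h n 0
      rw [zero_add, Nat.gcd_self] at this
      exact Nat.gcd_eq_left_iff_dvd.mp this.symm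
    simpa using Nat.gcd_eq_right hdvd
  | H1 m n _ ih =>
    rw [Nat.gcd_rec m n, ← ih]
    conv_lhs => rw [← Nat.mod_add_div' n m]
    rw [gcd_add_mul_self, Nat.gcd_comm]

structure IsLucasSequence (a b : ℤ) (V : ℕ → ℤ) : Prop where
  zero : V 0 = 0
  one : V 1 = 1
  add_two (n : ℕ) : V (n + 2) = a * V (n + 1) + b * V n

namespace IsLucasSequence

variable {a b : ℤ} {V : ℕ → ℤ}

theorem add_add_one (hV : IsLucasSequence a b V) (m n : ℕ) :
    V (m + n + 1) = V (m + 1) * V (n + 1) + b * V m * V n := by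
  induction m using Nat.twoStepInduction generalizing n with
  | zero => simp [hV.zero, hV.one]
  | one =>
    rw [show 1 + n + 1 = n + 2 by omega, hV.add_two, hV.add_two 0, hV.one, hV.zero]
    ring
  | more m ih₀ ih₁ =>
    rw [show m + 2 + n + 1 = m + n + 1 + 2 by omega, hV.add_two,
      show m + n + 1 + 1 = m + 1 + n + 1 by omega, ih₁, ih₀ n, hV.add_two (m + 1),
      show m + 1 + 1 = m + 2 by omega, hV.add_two m]
    ring

theorem isCoprime_succ_b (hV : IsLucasSequence a b V) (hab : IsCoprime a b) (n : ℕ) :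
    IsCoprime (V (n + 1)) b := by
  induction n with
  | zero => simpa [hV.one] using isCoprime_one_left
  | succ n ih => rw [hV.add_two, IsCoprime.add_mul_left_left_iff]; exact hab.mul_left ih

theorem isCoprime_succ_self (hV : IsLucasSequence a b V) (hab : IsCoprime a b) (n : ℕ) :
    IsCoprime (V (n + 1)) (V n) := by
  induction n with
  | zero => simpa [hV.zero, hV.one] using isCoprime_one_left
  | succ n ih =>
    rw [hV.add_two, add_comm, IsCoprime.add_mul_right_left_iff]
    exact (hV.isCoprime_succ_b hab n).symm.mul_left ih.symm

theorem gcd_add_self (hV : IsLucasSequence a b V) (hab : IsCoprime a b) (m n : ℕ) :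
    Int.gcd (V m) (V (n + m)) = Int.gcd (V m) (V n) := by
  cases n with
  | zero => simp [hV.zero]
  | succ k =>
    calc Int.gcd (V m) (V (k + 1 + m))
        = Int.gcd (V m) (V (k + 1) * V (m + 1) + b * V k * V m) := by
          rw [show k + 1 + m = k + m + 1 by omega, hV.add_add_one]
      _ = Int.gcd (V m) (V (k + 1)) := by
          rw [Int.gcd_add_mul_right_right,
            Int.gcd_mul_right_cancel_right_of_isCoprime _ (hV.isCoprime_succ_self hab m)]

theorem isStrongDvdSequence_natAbs (hV : IsLucasSequence a b V) (hab : IsCoprime a b) :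
    Nat.IsStrongDvdSequence fun n ↦ (V n).natAbs :=
  .of_gcd_add_self (hV.gcd_add_self hab)

end IsLucasSequence

theorem lucas_gcd_general (a b : ℤ) (hab : IsCoprime a b)
    (V : ℕ → ℤ) (hV0 : V 0 = 0) (hV1 : V 1 = 1)
    (hVrec : ∀ m : ℕ, 1 ≤ m → V (m + 1) = a * V m + b * V (m - 1)) :
    ∀ m n : ℕ, 0 < m → 0 < n → Int.gcd (V m) (V n) = (V (Nat.gcd m n)).natAbs := by
  have hV : IsLucasSequence a b V := ⟨hV0, hV1, fun n ↦ by simpa using hVrec (n + 1) (by omega)⟩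
  intro m n _ _
  exact hV.isStrongDvdSequence_natAbs hab m n

theorem lucas_gcd (a b : ℤ) (hab : IsCoprime a b)
    (α β : ℂ) (hα : α^2 - (a : ℂ) * α - (b : ℂ) = 0) (hβ : β^2 - (a : ℂ) * β - (b : ℂ) = 0)
    (hroots : ¬ ∃ k : ℕ, 0 < k ∧ (α / β) ^ k = 1)
    (V : ℕ → ℤ) (hV0 : V 0 = 0) (hV1 : V 1 = 1)
    (hVrec : ∀ m : ℕ, 1 ≤ m → V (m + 1) = a * V m + b * V (m - 1)) :
    ∀ m n : ℕ, 0 < m → 0 < n → Int.gcd (V m) (V n) = (V (Nat.gcd m n)).natAbs :=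
  lucas_gcd_general a b hab V hV0 hV1 hVrec
end

section
/- Let a be a positive even integer and define the integer sequence (V_m) by V₀ = 0, V₁ = 1 and V_{m+1} = a·V_m + V_{m-1} for m ≥ 1 (so V_m = (α^m - β^m)/(α-β) where α, β are the roots of X² - aX - 1). Then for any relatively prime odd positive integers m and n, the Jacobi symbol (V_m / V_n) equals 1. -/
/-!
Write `U = lucasU a`. Modulo `U n` the sequence is antisymmetric about `n`,
`U (n + j) ≡ (-1)^(j+1) U (n - j)`, and hence `U (2n + i) ≡ (-1)^n U i`. For odd `n` both
congruences reduce an odd index `m > n` to the odd index `|m - 2n| < m`, up to a sign that the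
Jacobi symbol ignores because `U n ≡ 1 [MOD 4]` for odd `n` when `a` is even. Together with
quadratic reciprocity this runs the Euclidean algorithm on `(m, n)` down to `n = 1`.
-/

lemma jacobiSym_eq_of_modEq_neg {x y : ℤ} {b : ℕ} (hb : b % 4 = 1) (h : x ≡ -y [ZMOD b]) :
    jacobiSym x b = jacobiSym y b := by
  rw [jacobiSym.mod_left' h, jacobiSym.neg _ (Nat.odd_iff.mpr (by omega)),
    ZMod.χ₄_nat_one_mod_four hb, one_mul]

def lucasU (a : ℤ) : ℕ → ℤ
  | 0 => 0
  | 1 => 1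
  | n + 2 => a * lucasU a (n + 1) + lucasU a n

@[simp] lemma lucasU_zero (a : ℤ) : lucasU a 0 = 0 := rfl

lemma lucasU_add_two (a : ℤ) (n : ℕ) :
    lucasU a (n + 2) = a * lucasU a (n + 1) + lucasU a n := rfl

lemma lucasU_add_modEq (a : ℤ) {i j n : ℕ} (h : i + j = n) :
    lucasU a (n + j) ≡ (-1) ^ (j + 1) * lucasU a i [ZMOD lucasU a n] := by
  induction j using Nat.twoStepInduction generalizing i with
  | zero =>
    subst h
    exact Int.modEq_iff_dvd.mpr ⟨-2, by simp only [add_zero]; ring⟩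
  | one =>
    subst h
    exact Int.modEq_iff_dvd.mpr ⟨-a, by rw [lucasU_add_two]; ring⟩
  | more j ih₀ ih₁ =>
    calc lucasU a (n + (j + 2))
        = a * lucasU a (n + (j + 1)) + lucasU a (n + j) := lucasU_add_two a (n + j)
      _ ≡ a * ((-1) ^ (j + 2) * lucasU a (i + 1)) + (-1) ^ (j + 1) * lucasU a (i + 2)
          [ZMOD lucasU a n] := ((ih₁ (by omega)).mul_left a).add (ih₀ (by omega))
      _ = (-1) ^ (j + 2 + 1) * lucasU a i := by rw [lucasU_add_two]; ring

lemma lucasU_two_mul_add_modEq (a : ℤ) (n i : ℕ) :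
    lucasU a (2 * n + i) ≡ (-1) ^ n * lucasU a i [ZMOD lucasU a n] := by
  have h₀ : lucasU a (2 * n) ≡ 0 [ZMOD lucasU a n] := by
    simpa [two_mul] using lucasU_add_modEq a (i := 0) (j := n) rfl
  induction i using Nat.twoStepInduction with
  | zero => simpa using h₀
  | one =>
    rcases n with _ | n
    · rfl
    calc lucasU a (2 * (n + 1) + 1)
        = a * lucasU a (2 * (n + 1)) + lucasU a (n + 1 + n) := by
          rw [show 2 * (n + 1) = n + 1 + n + 1 by ring]
          exact lucasU_add_two a (n + 1 + n)
      _ ≡ a * 0 + (-1) ^ (n + 1) * lucasU a 1 [ZMOD lucasU a (n + 1)] :=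
          (h₀.mul_left a).add (lucasU_add_modEq a (by omega))
      _ = (-1) ^ (n + 1) * lucasU a 1 := by ring
  | more i ih₀ ih₁ =>
    calc lucasU a (2 * n + (i + 2))
        = a * lucasU a (2 * n + (i + 1)) + lucasU a (2 * n + i) := lucasU_add_two a (2 * n + i)
      _ ≡ a * ((-1) ^ n * lucasU a (i + 1)) + (-1) ^ n * lucasU a i [ZMOD lucasU a n] :=
          (ih₁.mul_left a).add ih₀
      _ = (-1) ^ n * lucasU a (i + 2) := by rw [lucasU_add_two]; ring

section lucasU

variable {a : ℤ}

lemma eq_lucasU {V : ℕ → ℤ} (h0 : V 0 = 0) (h1 : V 1 = 1)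
    (hrec : ∀ n, V (n + 2) = a * V (n + 1) + V n) : V = lucasU a := by
  funext n
  induction n using Nat.twoStepInduction with
  | zero => exact h0
  | one => exact h1
  | more n ih₀ ih₁ => rw [hrec, lucasU_add_two, ih₀, ih₁]

lemma lucasU_nonneg (ha : 0 ≤ a) (n : ℕ) : 0 ≤ lucasU a n := by
  induction n using Nat.twoStepInduction with
  | zero => rfl
  | one => exact zero_le_one
  | more n ih₀ ih₁ => exact add_nonneg (mul_nonneg ha ih₁) ih₀

lemma even_lucasU_two_mul (hae : Even a) (k : ℕ) : Even (lucasU a (2 * k)) := by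
  induction k with
  | zero => exact ⟨0, rfl⟩
  | succ k ih => exact (hae.mul_right _).add ih

lemma lucasU_two_mul_add_one_emod_four (hae : Even a) (k : ℕ) : lucasU a (2 * k + 1) % 4 = 1 := by
  induction k with
  | zero => rfl
  | succ k ih =>
    obtain ⟨c, hc⟩ := even_lucasU_two_mul hae (k + 1)
    obtain ⟨b, hb⟩ := hae
    have h4 : a * lucasU a (2 * (k + 1)) = 4 * (b * c) := by rw [hc, hb]; ring
    have hrec : lucasU a (2 * (k + 1) + 1) = a * lucasU a (2 * (k + 1)) + lucasU a (2 * k + 1) :=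
      lucasU_add_two a (2 * k + 1)
    omega

lemma lucasU_emod_four_of_odd (hae : Even a) {n : ℕ} (hn : Odd n) : lucasU a n % 4 = 1 := by
  obtain ⟨k, rfl⟩ := hn
  exact lucasU_two_mul_add_one_emod_four hae k

lemma lucasU_modEq_neg_two_mul_sub {m n : ℕ} (hm : Odd m) (hn : Odd n) (h₁ : n ≤ m)
    (h₂ : m ≤ 2 * n) : lucasU a m ≡ -lucasU a (2 * n - m) [ZMOD lucasU a n] := by
  have h := lucasU_add_modEq a (i := 2 * n - m) (n := n) (j := m - n) (by omega)
  rwa [Nat.add_sub_cancel' h₁, (Nat.Odd.sub_odd hm hn).add_one.neg_one_pow, neg_one_mul] at h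

lemma lucasU_two_mul_add_modEq_neg {n : ℕ} (hn : Odd n) (i : ℕ) :
    lucasU a (2 * n + i) ≡ -lucasU a i [ZMOD lucasU a n] := by
  simpa [hn.neg_one_pow] using lucasU_two_mul_add_modEq a n i

lemma natCast_toNat_lucasU (ha : 0 ≤ a) (n : ℕ) : ((lucasU a n).toNat : ℤ) = lucasU a n :=
  Int.toNat_of_nonneg (lucasU_nonneg ha n)

lemma toNat_lucasU_emod_four (ha : 0 ≤ a) (hae : Even a) {n : ℕ} (hn : Odd n) :
    (lucasU a n).toNat % 4 = 1 := by
  have h₁ := natCast_toNat_lucasU ha n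
  have h₂ := lucasU_emod_four_of_odd hae hn
  omega

theorem jacobiSym_lucasU_eq_one (ha : 0 ≤ a) (hae : Even a) {m n : ℕ} (hm : Odd m) (hn : Odd n)
    (hmn : m.Coprime n) : jacobiSym (lucasU a m) (lucasU a n).toNat = 1 := by
  have hcast := natCast_toNat_lucasU ha n
  have h4 := toNat_lucasU_emod_four ha hae hn
  have hn0 := hn.pos
  rcases lt_trichotomy m n with hlt | rfl | hgt
  · rw [← natCast_toNat_lucasU ha m, jacobiSym.quadratic_reciprocity_one_mod_four
      (toNat_lucasU_emod_four ha hae hm) (Nat.odd_iff.mpr (by omega)), hcast]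
    exact jacobiSym_lucasU_eq_one ha hae hn hm hmn.symm
  · rw [(Nat.coprime_self m).mp hmn]
    exact jacobiSym.one_right _
  rcases le_or_gt m (2 * n) with hle | hlt
  · have hcop : (2 * n - m).Coprime n := by
      have h := (Nat.coprime_self_sub_left (m := m - n) (n := n) (by omega)).mpr
        (Nat.coprime_add_self_left.mp (by rwa [Nat.sub_add_cancel hgt.le]))
      rwa [show n - (m - n) = 2 * n - m by omega] at h
    rw [jacobiSym_eq_of_modEq_neg h4 (hcast ▸ lucasU_modEq_neg_two_mul_sub hm hn hgt.le hle)]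
    exact jacobiSym_lucasU_eq_one ha hae (Nat.Even.sub_odd hle (even_two_mul n) hm) hn hcop
  · obtain ⟨r, rfl⟩ : ∃ r, m = 2 * n + r := ⟨m - 2 * n, by omega⟩
    rw [jacobiSym_eq_of_modEq_neg h4 (hcast ▸ lucasU_two_mul_add_modEq_neg hn r)]
    exact jacobiSym_lucasU_eq_one ha hae ((Nat.odd_add'.mp hm).mpr (even_two_mul n)) hn
      ((Nat.coprime_mul_right_add_left r n 2).mp hmn)
termination_by (n, m)

end lucasU

theorem lucas_jacobi_symbol_eq_one_general (a : ℤ) (ha : 0 < a) (hae : Even a)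
    (V : ℕ → ℤ) (hV0 : V 0 = 0) (hV1 : V 1 = 1)
    (hVrec : ∀ m : ℕ, 1 ≤ m → V (m + 1) = a * V m + V (m - 1))
    (m n : ℕ) (hm : Odd m) (hn : Odd n)
    (hcop : Nat.Coprime m n) :
    jacobiSym (V m) (V n).toNat = 1 := by
  obtain rfl : V = lucasU a := eq_lucasU hV0 hV1 fun k => hVrec (k + 1) k.succ_pos
  exact jacobiSym_lucasU_eq_one ha.le hae hm hn hcop

theorem lucas_jacobi_symbol_eq_one (a : ℤ) (ha : 0 < a) (hae : Even a)
    (V : ℕ → ℤ) (hV0 : V 0 = 0) (hV1 : V 1 = 1)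
    (hVrec : ∀ m : ℕ, 1 ≤ m → V (m + 1) = a * V m + V (m - 1))
    (m n : ℕ) (hm0 : 0 < m) (hn0 : 0 < n) (hm : Odd m) (hn : Odd n)
    (hcop : Nat.Coprime m n) :
    jacobiSym (V m) (V n).toNat = 1 :=
  lucas_jacobi_symbol_eq_one_general a ha hae V hV0 hV1 hVrec m n hm hn hcop
end

section
/- Let t ≥ 1 be an integer. Then the four real numbers β⁽⁰⁾ = ε - ρ, β⁽¹⁾ = (ρ-1)/ε, β⁽²⁾ = ρ + ε, β⁽³⁾ = -(ρ+1)/ε are pairwise distinct and are exactly the four roots of X⁴ - tX³ - 6X² + tX + 1; that is, X⁴ - tX³ - 6X² + tX + 1 = (X - β⁽⁰⁾)(X - β⁽¹⁾)(X - β⁽²⁾)(X - β⁽³⁾). -/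
/-!
With `ε` the positive root of `2ε² - tε - 2 = 0`, i.e. `t = 2ε - 2/ε`, the quartic splits as
`(X² - 2εX - 1)(X² + (2/ε)X - 1)`. Since `ρ² - ε² = 1`, the first factor has roots `ε ∓ ρ` and the
second `(-1 ± ρ)/ε`. For `ε > 0` the four roots satisfy `β⁽³⁾ < β⁽⁰⁾ < 0 < β⁽¹⁾ < β⁽²⁾`.
-/

section Factorization

variable {K : Type*} [Field K]

theorem sq_sub_two_mul_sub_one_eq_mul {ε ρ : K} (hρ : ρ ^ 2 = 1 + ε ^ 2) (X : K) :
    X ^ 2 - 2 * ε * X - 1 = (X - (ε - ρ)) * (X - (ρ + ε)) := by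
  linear_combination hρ

theorem sq_add_two_div_mul_sub_one_eq_mul {ε ρ : K} (hε : ε ≠ 0) (hρ : ρ ^ 2 = 1 + ε ^ 2) (X : K) :
    X ^ 2 + 2 / ε * X - 1 = (X - (ρ - 1) / ε) * (X - -(ρ + 1) / ε) := by
  field_simp
  linear_combination hρ

theorem quartic_eq_mul_of_eq_two_mul_sub_two_div {ε t : K} (hε : ε ≠ 0) (ht : t = 2 * ε - 2 / ε)
    (X : K) :
    X ^ 4 - t * X ^ 3 - 6 * X ^ 2 + t * X + 1 =
      (X ^ 2 - 2 * ε * X - 1) * (X ^ 2 + 2 / ε * X - 1) := by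
  subst ht
  field_simp
  ring

end Factorization

theorem roots_strictly_ordered {K : Type*} [Field K] [LinearOrder K] [IsStrictOrderedRing K]
    {ε ρ : K} (hε : 0 < ε) (hρ0 : 0 ≤ ρ) (hρ : ρ ^ 2 = 1 + ε ^ 2) :
    -(ρ + 1) / ε < ε - ρ ∧ ε - ρ < (ρ - 1) / ε ∧ (ρ - 1) / ε < ρ + ε := by
  have hρ1 : 1 < ρ := by nlinarith
  have hρε : ε < ρ := by nlinarith
  refine ⟨?_, ?_, ?_⟩
  · rw [div_lt_iff₀ hε]
    nlinarith
  · have : 0 < (ρ - 1) / ε := div_pos (by linarith) hε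
    linarith
  · rw [div_lt_iff₀ hε]
    nlinarith

theorem two_mul_sub_two_div_eq_of_eq_add_sqrt {t ε : ℝ} (hε : ε = (t + √(t ^ 2 + 16)) / 4) :
    0 < ε ∧ t = 2 * ε - 2 / ε := by
  have hsq : √(t ^ 2 + 16) ^ 2 = t ^ 2 + 16 := Real.sq_sqrt (by positivity)
  have hlt : |t| < √(t ^ 2 + 16) := Real.lt_sqrt_of_sq_lt (by rw [sq_abs]; linarith)
  have hpos : 0 < ε := by rw [hε]; linarith [neg_abs_le t]
  refine ⟨hpos, ?_⟩
  have hroot : √(t ^ 2 + 16) = 4 * ε - t := by rw [hε]; ring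
  rw [hroot] at hsq
  field_simp
  linear_combination -hsq / 8

theorem quartic_roots_factorization_general (t : ℤ)
    (ε ρ : ℝ)
    (hε : ε = ((t : ℝ) + Real.sqrt ((t : ℝ)^2 + 16)) / 4)
    (hρ : ρ = Real.sqrt (1 + ε^2))
    (β0 β1 β2 β3 : ℝ)
    (h0 : β0 = ε - ρ) (h1 : β1 = (ρ - 1) / ε)
    (h2 : β2 = ρ + ε) (h3 : β3 = -(ρ + 1) / ε) :
    (β0 ≠ β1 ∧ β0 ≠ β2 ∧ β0 ≠ β3 ∧ β1 ≠ β2 ∧ β1 ≠ β3 ∧ β2 ≠ β3) ∧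
    ∀ X : ℝ, X^4 - (t : ℝ) * X^3 - 6 * X^2 + (t : ℝ) * X + 1 =
      (X - β0) * (X - β1) * (X - β2) * (X - β3) := by
  obtain ⟨hεpos, ht⟩ := two_mul_sub_two_div_eq_of_eq_add_sqrt hε
  have hρsq : ρ ^ 2 = 1 + ε ^ 2 := by rw [hρ]; exact Real.sq_sqrt (by positivity)
  obtain ⟨h30, h01, h12⟩ := roots_strictly_ordered hεpos (hρ ▸ Real.sqrt_nonneg _) hρsq
  subst h0 h1 h2 h3
  refine ⟨⟨h01.ne, (h01.trans h12).ne, h30.ne', h12.ne, (h30.trans h01).ne',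
    (h30.trans (h01.trans h12)).ne'⟩, fun X => ?_⟩
  rw [quartic_eq_mul_of_eq_two_mul_sub_two_div hεpos.ne' ht, sq_sub_two_mul_sub_one_eq_mul hρsq,
    sq_add_two_div_mul_sub_one_eq_mul hεpos.ne' hρsq]
  ring

theorem quartic_roots_factorization (t : ℤ) (ht : 1 ≤ t)
    (ε ρ : ℝ)
    (hε : ε = ((t : ℝ) + Real.sqrt ((t : ℝ)^2 + 16)) / 4)
    (hρ : ρ = Real.sqrt (1 + ε^2))
    (β0 β1 β2 β3 : ℝ)
    (h0 : β0 = ε - ρ) (h1 : β1 = (ρ - 1) / ε)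
    (h2 : β2 = ρ + ε) (h3 : β3 = -(ρ + 1) / ε) :
    (β0 ≠ β1 ∧ β0 ≠ β2 ∧ β0 ≠ β3 ∧ β1 ≠ β2 ∧ β1 ≠ β3 ∧ β2 ≠ β3) ∧
    ∀ X : ℝ, X^4 - (t : ℝ) * X^3 - 6 * X^2 + (t : ℝ) * X + 1 =
      (X - β0) * (X - β1) * (X - β2) * (X - β3) :=
  quartic_roots_factorization_general t ε ρ hε hρ β0 β1 β2 β3 h0 h1 h2 h3
end

section
/- Let t ≥ 5 be an integer. Then: -1/t < β⁽⁰⁾ < -1/(t+1); 1 - 2/(t+1) < β⁽¹⁾ < 1 - 2/(t+2); t + 5/(t+1) < β⁽²⁾ < t + 5/t; and -1 - 2/(t-1) < β⁽³⁾ < -1 - 2/t. -/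
/-!
Dividing `X⁴ - tX³ - 6X² + tX + 1` by `X²` and substituting `Y = X - 1/X` leaves `Y² - tY - 4`. So a
root `x ∉ {0, ±1}` solves `quarticParam x = t`, where `quarticParam` is `x ↦ x - 1/x` followed by
`y ↦ y - 4/y`; both maps increase on each half-line, so `quarticParam` is strictly increasing on
`(0, 1)` and on `(1, ∞)`. Hence `β⁽²⁾ > 1` and `β⁽¹⁾ ∈ (0, 1)` are located by the sign of the
quartic at the proposed endpoints, an explicit rational function of `t`. The other two roots are
`β⁽⁰⁾ = -1/β⁽²⁾` and `β⁽³⁾ = -1/β⁽¹⁾`, and `x ↦ -1/x` carries the bounds over.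
-/

open Set

theorem StrictMonoOn.mem_Ioo_of_lt_of_lt {α β : Type*} [LinearOrder α] [Preorder β]
    {f : α → β} {s : Set α} {a b x : α} (hf : StrictMonoOn f s) (ha : a ∈ s) (hx : x ∈ s)
    (hb : b ∈ s) (hax : f a < f x) (hxb : f x < f b) : x ∈ Ioo a b :=
  ⟨(hf.lt_iff_lt ha hx).1 hax, (hf.lt_iff_lt hx hb).1 hxb⟩

theorem neg_one_div_mem_Ioo {a b x : ℝ} (ha : 0 < a) (hx : x ∈ Ioo a b) :
    -1 / x ∈ Ioo (-1 / a) (-1 / b) := by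
  simp only [neg_div, mem_Ioo, neg_lt_neg_iff]
  exact ⟨one_div_lt_one_div_of_lt ha hx.1, one_div_lt_one_div_of_lt (ha.trans hx.1) hx.2⟩

theorem neg_one_div_one_sub_two_div {s : ℝ} (hs : s ≠ 0) (hs2 : s + 2 ≠ 0) :
    -1 / (1 - 2 / (s + 2)) = -1 - 2 / s := by
  rw [show 1 - 2 / (s + 2) = s / (s + 2) by field_simp; ring]
  field_simp
  ring

theorem one_sub_div_mem_Ioo {c s : ℝ} (hc : 0 < c) (hs : c < s) : 1 - c / s ∈ Ioo 0 1 :=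
  ⟨sub_pos.2 ((div_lt_one (hc.trans hs)).2 hs), sub_lt_self 1 (div_pos hc (hc.trans hs))⟩

noncomputable def subDiv (c x : ℝ) : ℝ := x - c / x

theorem subDiv_lt_subDiv {c a b : ℝ} (hc : 0 ≤ c) (hab : a < b) (hab0 : 0 < a * b) :
    subDiv c a < subDiv c b := by
  have ha : a ≠ 0 := left_ne_zero_of_mul hab0.ne'
  have hb : b ≠ 0 := right_ne_zero_of_mul hab0.ne'
  have hdiff : subDiv c b - subDiv c a = (b - a) * (1 + c / (a * b)) := by
    unfold subDiv
    field_simp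
    ring
  have : 0 < (b - a) * (1 + c / (a * b)) :=
    mul_pos (sub_pos.2 hab) (by linarith [div_nonneg hc hab0.le])
  linarith

theorem strictMonoOn_subDiv_Ioi {c : ℝ} (hc : 0 ≤ c) : StrictMonoOn (subDiv c) (Ioi 0) :=
  fun _ ha _ hb hab => subDiv_lt_subDiv hc hab (mul_pos ha hb)

theorem strictMonoOn_subDiv_Iio {c : ℝ} (hc : 0 ≤ c) : StrictMonoOn (subDiv c) (Iio 0) :=
  fun _ ha _ hb hab => subDiv_lt_subDiv hc hab (mul_pos_of_neg_of_neg ha hb)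

def simplestQuartic (t x : ℝ) : ℝ := x ^ 4 - t * x ^ 3 - 6 * x ^ 2 + t * x + 1

noncomputable def quarticParam (x : ℝ) : ℝ := subDiv 4 (subDiv 1 x)

theorem quarticParam_sub {x : ℝ} (t : ℝ) (hx : x ≠ 0) (hx1 : x ^ 2 ≠ 1) :
    quarticParam x - t = simplestQuartic t x / (x * (x ^ 2 - 1)) := by
  have h1 : x ^ 2 - 1 ≠ 0 := sub_ne_zero.2 hx1
  unfold quarticParam subDiv simplestQuartic
  rw [eq_div_iff (mul_ne_zero hx h1)]
  field_simp
  ring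

theorem strictMonoOn_quarticParam_Ioi_one : StrictMonoOn quarticParam (Ioi 1) := by
  refine (strictMonoOn_subDiv_Ioi (by norm_num)).comp
    ((strictMonoOn_subDiv_Ioi zero_le_one).mono fun x (hx : 1 < x) => zero_lt_one.trans hx)
    fun x (hx : 1 < x) => ?_
  have : 1 / x < 1 := (div_lt_one (by linarith)).2 hx
  show 0 < x - 1 / x
  linarith

theorem strictMonoOn_quarticParam_Ioo_zero_one : StrictMonoOn quarticParam (Ioo 0 1) := by
  refine (strictMonoOn_subDiv_Iio (by norm_num)).comp
    ((strictMonoOn_subDiv_Ioi zero_le_one).mono fun x hx => hx.1)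
    fun x hx => ?_
  have : 1 < 1 / x := (one_lt_div hx.1).2 hx.2
  show x - 1 / x < 0
  linarith [hx.2]

theorem mem_Ioo_of_simplestQuartic_of_one_lt {t a b x : ℝ} (ha : 1 < a) (hx : 1 < x)
    (hb : 1 < b) (hqa : simplestQuartic t a < 0) (hqx : simplestQuartic t x = 0)
    (hqb : 0 < simplestQuartic t b) : x ∈ Ioo a b := by
  have sub_eq {y : ℝ} (hy : 1 < y) :
      quarticParam y - t = simplestQuartic t y / (y * (y ^ 2 - 1)) ∧ 0 < y * (y ^ 2 - 1) := by
    have : 1 < y ^ 2 := one_lt_pow₀ hy two_ne_zero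
    exact ⟨quarticParam_sub t (by positivity) this.ne', mul_pos (by linarith) (by linarith)⟩
  obtain ⟨hpa, hda⟩ := sub_eq ha
  obtain ⟨hpx, -⟩ := sub_eq hx
  obtain ⟨hpb, hdb⟩ := sub_eq hb
  rw [hqx, zero_div, sub_eq_zero] at hpx
  refine strictMonoOn_quarticParam_Ioi_one.mem_Ioo_of_lt_of_lt ha hx hb ?_ ?_
  · linarith [div_neg_of_neg_of_pos hqa hda]
  · linarith [div_pos hqb hdb]

theorem mem_Ioo_of_simplestQuartic_of_mem_Ioo {t a b x : ℝ} (ha : a ∈ Ioo 0 1)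
    (hx : x ∈ Ioo 0 1) (hb : b ∈ Ioo 0 1) (hqa : 0 < simplestQuartic t a)
    (hqx : simplestQuartic t x = 0) (hqb : simplestQuartic t b < 0) : x ∈ Ioo a b := by
  have sub_eq {y : ℝ} (hy : y ∈ Ioo 0 1) :
      quarticParam y - t = simplestQuartic t y / (y * (y ^ 2 - 1)) ∧ y * (y ^ 2 - 1) < 0 := by
    have : y ^ 2 < 1 := pow_lt_one₀ hy.1.le hy.2 two_ne_zero
    exact ⟨quarticParam_sub t hy.1.ne' this.ne, mul_neg_of_pos_of_neg hy.1 (by linarith)⟩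
  obtain ⟨hpa, hda⟩ := sub_eq ha
  obtain ⟨hpx, -⟩ := sub_eq hx
  obtain ⟨hpb, hdb⟩ := sub_eq hb
  rw [hqx, zero_div, sub_eq_zero] at hpx
  refine strictMonoOn_quarticParam_Ioo_zero_one.mem_Ioo_of_lt_of_lt ha hx hb ?_ ?_
  · linarith [div_neg_of_pos_of_neg hqa hda]
  · linarith [div_pos_of_neg_of_neg hqb hdb]

theorem simplestQuartic_add_five_div_add_one_neg {t : ℝ} (ht : 4 ≤ t) :
    simplestQuartic t (t + 5 / (t + 1)) < 0 := by
  have h1 : t + 1 ≠ 0 := by positivity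
  have hval : simplestQuartic t (t + 5 / (t + 1)) =
      (476 + 24 * t + 136 * t ^ 2 - 26 * t ^ 3 + 6 * t ^ 4 - 5 * t ^ 5) / (t + 1) ^ 4 := by
    unfold simplestQuartic
    field_simp
    ring
  rw [hval]
  refine div_neg_of_neg_of_pos ?_ (by positivity)
  nlinarith [mul_nonneg (sub_nonneg.2 ht) (sub_nonneg.2 ht), pow_le_pow_left₀ (by norm_num) ht 3]

theorem simplestQuartic_add_five_div_pos {t : ℝ} (ht : t ≠ 0) :
    0 < simplestQuartic t (t + 5 / t) := by
  have hval : simplestQuartic t (t + 5 / t) = (625 + 225 * t ^ 2 + 21 * t ^ 4) / t ^ 4 := by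
    unfold simplestQuartic
    field_simp
    ring
  rw [hval]
  positivity

theorem simplestQuartic_one_sub_two_div_add_one_pos {t : ℝ} (ht : 1 < t) :
    0 < simplestQuartic t (1 - 2 / (t + 1)) := by
  have h1 : t + 1 ≠ 0 := by positivity
  have hval : simplestQuartic t (1 - 2 / (t + 1)) = (20 * t ^ 2 - 4) / (t + 1) ^ 4 := by
    unfold simplestQuartic
    field_simp
    ring
  rw [hval]
  exact div_pos (by nlinarith) (by positivity)

theorem simplestQuartic_one_sub_two_div_add_two_neg {t : ℝ} (ht : 5 ≤ t) :
    simplestQuartic t (1 - 2 / (t + 2)) < 0 := by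
  have h1 : t + 2 ≠ 0 := by positivity
  have hval : simplestQuartic t (1 - 2 / (t + 2)) =
      (16 + 32 * t + 8 * t ^ 2 - 4 * t ^ 3) / (t + 2) ^ 4 := by
    unfold simplestQuartic
    field_simp
    ring
  rw [hval]
  refine div_neg_of_neg_of_pos ?_ (by positivity)
  nlinarith [mul_nonneg (sub_nonneg.2 ht) (sub_nonneg.2 ht)]

theorem pos_and_two_mul_sq_eq {t ε : ℝ} (hε : ε = (t + √(t ^ 2 + 16)) / 4) :
    0 < ε ∧ 2 * ε ^ 2 = t * ε + 2 := by
  have hsq : √(t ^ 2 + 16) ^ 2 = t ^ 2 + 16 := Real.sq_sqrt (by positivity)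
  have hnonneg := Real.sqrt_nonneg (t ^ 2 + 16)
  subst hε
  exact ⟨by nlinarith, by linear_combination hsq / 8⟩

section

variable {t ε ρ : ℝ}

theorem simplestQuartic_add_eq_zero (hεt : 2 * ε ^ 2 = t * ε + 2)
    (hρ2 : ρ ^ 2 = 1 + ε ^ 2) : simplestQuartic t (ρ + ε) = 0 := by
  unfold simplestQuartic
  linear_combination
    ((ρ + ε) ^ 2 - 1 + 2 * ε * (ρ + ε) - t * (ρ + ε)) * hρ2 + 2 * (ρ + ε) ^ 2 * hεt

theorem simplestQuartic_sub_one_div_eq_zero (hε0 : ε ≠ 0) (hεt : 2 * ε ^ 2 = t * ε + 2)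
    (hρ2 : ρ ^ 2 = 1 + ε ^ 2) : simplestQuartic t ((ρ - 1) / ε) = 0 := by
  have hval : ε ^ 4 * simplestQuartic t ((ρ - 1) / ε) =
      (ρ - 1) ^ 4 - t * ε * (ρ - 1) ^ 3 - 6 * ε ^ 2 * (ρ - 1) ^ 2 + t * ε ^ 3 * (ρ - 1)
        + ε ^ 4 := by
    unfold simplestQuartic
    field_simp
  refine (mul_eq_zero.1 (hval.trans ?_)).resolve_left (pow_ne_zero 4 hε0)
  linear_combination (ρ ^ 2 - 1 - ε ^ 2 - (4 + t * ε) * (ρ - 1)) * hρ2 - 2 * (ρ - 1) ^ 2 * hεt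

theorem one_lt_of_sq_eq_one_add_sq (hε0 : 0 < ε) (hρ0 : 0 ≤ ρ) (hρ2 : ρ ^ 2 = 1 + ε ^ 2) :
    1 < ρ := by
  nlinarith

theorem sub_eq_neg_one_div_add (hε0 : 0 < ε) (hρ0 : 0 ≤ ρ) (hρ2 : ρ ^ 2 = 1 + ε ^ 2) :
    ε - ρ = -1 / (ρ + ε) := by
  rw [eq_div_iff (by positivity)]
  linear_combination -hρ2

theorem neg_add_one_div_eq_neg_one_div (hε0 : 0 < ε) (hρ0 : 0 ≤ ρ) (hρ2 : ρ ^ 2 = 1 + ε ^ 2) :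
    -(ρ + 1) / ε = -1 / ((ρ - 1) / ε) := by
  have : ρ - 1 ≠ 0 := sub_ne_zero.2 (one_lt_of_sq_eq_one_add_sq hε0 hρ0 hρ2).ne'
  field_simp
  linear_combination -hρ2

theorem add_mem_Ioo_of_two_mul_sq_eq (ht : 4 ≤ t) (hε0 : 0 < ε) (hεt : 2 * ε ^ 2 = t * ε + 2)
    (hρ0 : 0 ≤ ρ) (hρ2 : ρ ^ 2 = 1 + ε ^ 2) : ρ + ε ∈ Ioo (t + 5 / (t + 1)) (t + 5 / t) := by
  have hρ1 := one_lt_of_sq_eq_one_add_sq hε0 hρ0 hρ2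
  exact mem_Ioo_of_simplestQuartic_of_one_lt
    (by linarith [show 0 < 5 / (t + 1) by positivity]) (by linarith)
    (by linarith [show 0 < 5 / t by positivity])
    (simplestQuartic_add_five_div_add_one_neg ht) (simplestQuartic_add_eq_zero hεt hρ2)
    (simplestQuartic_add_five_div_pos (by positivity))

theorem sub_one_div_mem_Ioo_of_two_mul_sq_eq (ht : 5 ≤ t) (hε0 : 0 < ε)
    (hεt : 2 * ε ^ 2 = t * ε + 2) (hρ0 : 0 ≤ ρ) (hρ2 : ρ ^ 2 = 1 + ε ^ 2) :
    (ρ - 1) / ε ∈ Ioo (1 - 2 / (t + 1)) (1 - 2 / (t + 2)) := by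
  have hρ1 := one_lt_of_sq_eq_one_add_sq hε0 hρ0 hρ2
  have hρε : ρ - 1 < ε := by nlinarith
  exact mem_Ioo_of_simplestQuartic_of_mem_Ioo (one_sub_div_mem_Ioo two_pos (by linarith))
    ⟨div_pos (by linarith) hε0, (div_lt_one hε0).2 hρε⟩
    (one_sub_div_mem_Ioo two_pos (by linarith))
    (simplestQuartic_one_sub_two_div_add_one_pos (by linarith))
    (simplestQuartic_sub_one_div_eq_zero hε0.ne' hεt hρ2)
    (simplestQuartic_one_sub_two_div_add_two_neg ht)

end

theorem beta_bounds (t : ℤ) (ht : 5 ≤ t)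
    (ε ρ : ℝ)
    (hε : ε = ((t : ℝ) + Real.sqrt ((t : ℝ)^2 + 16)) / 4)
    (hρ : ρ = Real.sqrt (1 + ε^2))
    (β0 β1 β2 β3 : ℝ)
    (h0 : β0 = ε - ρ) (h1 : β1 = (ρ - 1) / ε)
    (h2 : β2 = ρ + ε) (h3 : β3 = -(ρ + 1) / ε) :
    (-1 / (t : ℝ) < β0 ∧ β0 < -1 / ((t : ℝ) + 1)) ∧
    (1 - 2 / ((t : ℝ) + 1) < β1 ∧ β1 < 1 - 2 / ((t : ℝ) + 2)) ∧
    ((t : ℝ) + 5 / ((t : ℝ) + 1) < β2 ∧ β2 < (t : ℝ) + 5 / (t : ℝ)) ∧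
    (-1 - 2 / ((t : ℝ) - 1) < β3 ∧ β3 < -1 - 2 / (t : ℝ)) := by
  have ht5 : (5 : ℝ) ≤ t := by exact_mod_cast ht
  obtain ⟨hε0, hεt⟩ := pos_and_two_mul_sq_eq hε
  have hρ0 : 0 ≤ ρ := hρ ▸ Real.sqrt_nonneg _
  have hρ2 : ρ ^ 2 = 1 + ε ^ 2 := hρ ▸ Real.sq_sqrt (by positivity)
  have hβ2 : β2 ∈ Ioo ((t : ℝ) + 5 / (t + 1)) (t + 5 / t) :=
    h2 ▸ add_mem_Ioo_of_two_mul_sq_eq (by linarith) hε0 hεt hρ0 hρ2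
  have hβ1 : β1 ∈ Ioo (1 - 2 / ((t : ℝ) + 1)) (1 - 2 / (t + 2)) :=
    h1 ▸ sub_one_div_mem_Ioo_of_two_mul_sq_eq ht5 hε0 hεt hρ0 hρ2
  refine ⟨?_, hβ1, hβ2, ?_⟩
  · rw [h0, sub_eq_neg_one_div_add hε0 hρ0 hρ2, ← h2]
    refine neg_one_div_mem_Ioo (by positivity)
      ⟨(lt_add_of_pos_right _ (by positivity)).trans hβ2.1, ?_⟩
    linarith [hβ2.2, (div_le_one (by positivity)).2 ht5]
  · rw [h3, neg_add_one_div_eq_neg_one_div hε0 hρ0 hρ2, ← h1,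
      ← neg_one_div_one_sub_two_div (s := t) (by positivity) (by positivity),
      ← neg_one_div_one_sub_two_div (s := t - 1) (by linarith) (by linarith),
      show (t : ℝ) - 1 + 2 = t + 1 by ring]
    exact neg_one_div_mem_Ioo (one_sub_div_mem_Ioo two_pos (by linarith)).1 hβ1
end

section
/- Let t > 4 be a real number and set ω = ε/ρ + i/ρ. Then ω⁴ = (t²-16)/(t²+16) + i·8t/(t²+16), and with a(0) = -5, b(0) = 5, c(0) = -5i, d(0) = -5i, a(1) = 5i - 5, b(1) = 5i + 5, c(1) = -5 - 5i, d(1) = 5 - 5i, one has for j = 0 and j = 1: β⁽ʲ⁾·(a(j)·ω - b(j)) - (c(j)·ω - d(j)) = 0. -/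
/-!
With `ε = (t + √(t² + 16))/4` and `ρ = √(1 + ε²)`, the number `ω = (ε + i)/ρ` lies on the unit
circle. Since `ε` is the positive root of `2x² - tx - 2`, one has `(ε + i)² = ε(t + 4i)/2` and
`ρ⁴ = ε²(t² + 16)/4`, whence `ω⁴ = (t + 4i)²/(t² + 16)`. The two root identities are the Möbius
relations `β⁽⁰⁾(ω + 1) = i(ω - 1)` and `β⁽¹⁾(ω + i) = iω + 1`, which only use `ρ² = 1 + ε²`.
-/

open Complex

lemma quarter_add_sqrt_sq_add_sixteen_pos (t : ℝ) : 0 < (t + √(t ^ 2 + 16)) / 4 := by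
  have h : |t| < √(t ^ 2 + 16) := Real.lt_sqrt (abs_nonneg t) |>.mpr (by rw [sq_abs]; linarith)
  linarith [neg_abs_le t]

lemma two_mul_quarter_add_sqrt_sq (t : ℝ) :
    2 * ((t + √(t ^ 2 + 16)) / 4) ^ 2 = (t + √(t ^ 2 + 16)) / 4 * t + 2 := by
  linear_combination Real.sq_sqrt (by positivity : (0 : ℝ) ≤ t ^ 2 + 16) / 8

section UnitCircle

variable {ε ρ : ℝ}

lemma ofReal_ne_zero_of_sq_eq_one_add_sq (hρ : ρ ^ 2 = 1 + ε ^ 2) : (ρ : ℂ) ≠ 0 :=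
  ofReal_ne_zero.mpr (by rintro rfl; nlinarith)

lemma add_I_div_pow_four {t : ℝ} (hε : ε ≠ 0) (hεt : 2 * ε ^ 2 = ε * t + 2)
    (hρ : ρ ^ 2 = 1 + ε ^ 2) :
    ((ε + I) / ρ) ^ 4 = (t ^ 2 - 16 + 8 * t * I) / (t ^ 2 + 16) := by
  have hεt' : 2 * (ε : ℂ) ^ 2 = ε * t + 2 := by exact_mod_cast hεt
  have hsq : ((ε : ℂ) + I) ^ 2 = ε * (t + 4 * I) / 2 := by
    linear_combination hεt' / 2 + I_sq
  have hρ4 : (ρ : ℂ) ^ 4 = ε ^ 2 * (t ^ 2 + 16) / 4 := by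
    have hρ' : (ρ : ℂ) ^ 2 = 1 + ε ^ 2 := by exact_mod_cast hρ
    linear_combination (ρ ^ 2 + 1 + ε ^ 2 : ℂ) * hρ' + (2 * ε ^ 2 - 2 + ε * t : ℂ) * hεt' / 4
  have ht : (t : ℂ) ^ 2 + 16 ≠ 0 := by exact_mod_cast (by positivity : t ^ 2 + 16 ≠ 0)
  have hε' : (ε : ℂ) ≠ 0 := by exact_mod_cast hε
  rw [div_pow, show ((ε : ℂ) + I) ^ 4 = (((ε : ℂ) + I) ^ 2) ^ 2 by ring, hsq, hρ4]
  field_simp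
  linear_combination 64 * I_sq

lemma sub_mul_add_I_div_add_one (hρ : ρ ^ 2 = 1 + ε ^ 2) :
    ((ε - ρ : ℝ) : ℂ) * ((ε + I) / ρ + 1) = I * ((ε + I) / ρ - 1) := by
  have hρ' : (ρ : ℂ) ^ 2 = 1 + ε ^ 2 := by exact_mod_cast hρ
  push_cast
  field_simp [ofReal_ne_zero_of_sq_eq_one_add_sq hρ]
  linear_combination -hρ' - I_sq

lemma sub_one_div_mul_add_I_div_add_I (hε : ε ≠ 0) (hρ : ρ ^ 2 = 1 + ε ^ 2) :
    ((ρ - 1) / ε : ℝ) * ((ε + I) / ρ + I) = I * ((ε + I) / ρ) + 1 := by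
  have hρ' : (ρ : ℂ) ^ 2 = 1 + ε ^ 2 := by exact_mod_cast hρ
  have hε' : (ε : ℂ) ≠ 0 := by exact_mod_cast hε
  push_cast
  field_simp [ofReal_ne_zero_of_sq_eq_one_add_sq hρ]
  linear_combination I * hρ' - ε * I_sq

end UnitCircle

theorem omega_fourth_power_and_root_identities_general (t : ℝ)
    (ε ρ : ℝ)
    (hε : ε = (t + Real.sqrt (t^2 + 16)) / 4)
    (hρ : ρ = Real.sqrt (1 + ε^2))
    (β0 β1 : ℝ) (h0 : β0 = ε - ρ) (h1 : β1 = (ρ - 1) / ε)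
    (ω : ℂ) (hω : ω = ((ε / ρ : ℝ) : ℂ) + Complex.I * ((1 / ρ : ℝ) : ℂ)) :
    ω^4 = (((t^2 - 16) / (t^2 + 16) : ℝ) : ℂ) +
        Complex.I * ((8 * t / (t^2 + 16) : ℝ) : ℂ) ∧
    (β0 : ℂ) * ((-5) * ω - 5) - ((-5 * Complex.I) * ω - (-5 * Complex.I)) = 0 ∧
    (β1 : ℂ) * ((5 * Complex.I - 5) * ω - (5 * Complex.I + 5)) -
        ((-5 - 5 * Complex.I) * ω - (5 - 5 * Complex.I)) = 0 := by
  have hεpos : 0 < ε := hε ▸ quarter_add_sqrt_sq_add_sixteen_pos t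
  have hεt : 2 * ε ^ 2 = ε * t + 2 := hε ▸ two_mul_quarter_add_sqrt_sq t
  have hρsq : ρ ^ 2 = 1 + ε ^ 2 := hρ ▸ Real.sq_sqrt (by positivity)
  have hω' : ω = (ε + I) / ρ := by rw [hω]; push_cast; ring
  have hβ0 : (β0 : ℂ) * (ω + 1) = I * (ω - 1) := by
    rw [h0, hω']; exact sub_mul_add_I_div_add_one hρsq
  have hβ1 : (β1 : ℂ) * (ω + I) = I * ω + 1 := by
    rw [h1, hω']; exact sub_one_div_mul_add_I_div_add_I hεpos.ne' hρsq
  refine ⟨?_, ?_, ?_⟩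
  · rw [hω', add_I_div_pow_four hεpos.ne' hεt hρsq]
    push_cast
    ring
  · linear_combination -5 * hβ0
  · linear_combination 5 * (I - 1) * hβ1 + 5 * (ω - β1) * I_sq

theorem omega_fourth_power_and_root_identities (t : ℝ) (ht : 4 < t)
    (ε ρ : ℝ)
    (hε : ε = (t + Real.sqrt (t^2 + 16)) / 4)
    (hρ : ρ = Real.sqrt (1 + ε^2))
    (β0 β1 : ℝ) (h0 : β0 = ε - ρ) (h1 : β1 = (ρ - 1) / ε)
    (ω : ℂ) (hω : ω = ((ε / ρ : ℝ) : ℂ) + Complex.I * ((1 / ρ : ℝ) : ℂ)) :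
    ω^4 = (((t^2 - 16) / (t^2 + 16) : ℝ) : ℂ) +
        Complex.I * ((8 * t / (t^2 + 16) : ℝ) : ℂ) ∧
    (β0 : ℂ) * ((-5) * ω - 5) - ((-5 * Complex.I) * ω - (-5 * Complex.I)) = 0 ∧
    (β1 : ℂ) * ((5 * Complex.I - 5) * ω - (5 * Complex.I + 5)) -
        ((-5 - 5 * Complex.I) * ω - (5 - 5 * Complex.I)) = 0 :=
  omega_fourth_power_and_root_identities_general t ε ρ hε hρ β0 β1 h0 h1 ω hω
end
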